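/- arXiv:1707.08669 — 15 statements merged into one kernel-verified Lean document; each statement's English description precedes it below -/
import Mathlib

section
/- In the super Jordan plane B, the identity x21·x2² = (x2² − x21)·x21 holds. -/
/-- The defining relations of the super Jordan plane: `x1² = 0` and
`x2·x21 − x21·x2 − x1·x21 = 0`, where `x21 = x1·x2 + x2·x1`,
inside the free algebra on two generators. -/
inductive SuperJordanRel (k : Type*) [Field k] :
    FreeAlgebra k (Fin 2) → FreeAlgebra k (Fin 2) → Prop
  | quad : SuperJordanRel k (FreeAlgebra.ι k 0 * FreeAlgebra.ι k 0) 0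
  | cubic : SuperJordanRel k
      (FreeAlgebra.ι k 1 *
          (FreeAlgebra.ι k 0 * FreeAlgebra.ι k 1 + FreeAlgebra.ι k 1 * FreeAlgebra.ι k 0)
        - (FreeAlgebra.ι k 0 * FreeAlgebra.ι k 1 + FreeAlgebra.ι k 1 * FreeAlgebra.ι k 0) *
            FreeAlgebra.ι k 1
        - FreeAlgebra.ι k 0 *
            (FreeAlgebra.ι k 0 * FreeAlgebra.ι k 1 + FreeAlgebra.ι k 1 * FreeAlgebra.ι k 0)) 0

/-- The super Jordan plane. -/
abbrev SuperJordanPlane (k : Type*) [Field k] := RingQuot (SuperJordanRel k)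

/-- The generator `x1` of the super Jordan plane. -/
noncomputable def x1 (k : Type*) [Field k] : SuperJordanPlane k :=
  RingQuot.mkAlgHom k (SuperJordanRel k) (FreeAlgebra.ι k 0)

/-- The generator `x2` of the super Jordan plane. -/
noncomputable def x2 (k : Type*) [Field k] : SuperJordanPlane k :=
  RingQuot.mkAlgHom k (SuperJordanRel k) (FreeAlgebra.ι k 1)

/-- The element `x21 = x1·x2 + x2·x1` of the super Jordan plane. -/
noncomputable def x21 (k : Type*) [Field k] : SuperJordanPlane k :=
  x1 k * x2 k + x2 k * x1 k

theorem stmt1 (k : Type*) [Field k] [CharZero k] :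
    x21 k * x2 k ^ 2 = (x2 k ^ 2 - x21 k) * x21 k := by

  set a := x1 k with ha
  set b := x2 k with hb
  set c := x21 k with hc
  have h1 : a * a = 0 := by
    have := RingQuot.mkAlgHom_rel k (SuperJordanRel.quad (k := k))
    simpa [ha, x1, map_mul] using this
  have h2 : c * b = b * c - a * c := by
    have := RingQuot.mkAlgHom_rel k (SuperJordanRel.cubic (k := k))
    simp only [map_sub, map_mul, map_add, map_zero] at this
    rw [hc, x21, ha, x1, hb, x2]
    linear_combination (norm := noncomm_ring) -this
  have hc' : a * b + b * a = c := by rw [hc, x21, ha, x1, hb, x2]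
  clear_value a b c
  calc c * b ^ 2 = (c * b) * b := by rw [sq, mul_assoc]
    _ = (b * c - a * c) * b := by rw [h2]
    _ = b * (c * b) - a * (c * b) := by rw [sub_mul, mul_assoc, mul_assoc]
    _ = b * (b * c - a * c) - a * (b * c - a * c) := by rw [h2]
    _ = b * b * c - (a * b + b * a) * c + (a * a) * c := by
        simp only [mul_sub, add_mul, mul_assoc]; abel
    _ = b * b * c - c * c := by rw [h1, hc']; simp
    _ = (b ^ 2 - c) * c := by rw [sq, sub_mul]
end

section
/- In the super Jordan plane B, with s := x21 and t := x2², for every natural number n ≥ 1 one has the commutator identity t·sⁿ − sⁿ·t = n·sⁿ⁺¹ (where n is regarded as an element of k). -/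
lemma hx1sq (k : Type*) [Field k] : x1 k * x1 k = 0 := by
  have := RingQuot.mkAlgHom_rel k (SuperJordanRel.quad (k := k))
  simpa [x1] using this

lemma hcubic (k : Type*) [Field k] :
    x2 k * x21 k = x21 k * x2 k + x1 k * x21 k := by
  have h := RingQuot.mkAlgHom_rel k (SuperJordanRel.cubic (k := k))
  simp only [map_sub, map_add, map_mul, map_zero, sub_sub, sub_eq_zero] at h
  simpa [x1, x2, x21, map_add, map_mul] using h

lemma hxs (k : Type*) [Field k] : x1 k * x21 k = x21 k * x1 k := by
  have h := hx1sq k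
  set x := x1 k; set y := x2 k
  have hz : ∀ z : SuperJordanPlane k, x*(x*z) = 0 :=
    fun z => by rw [← mul_assoc, h, zero_mul]
  show x*(x*y+y*x) = (x*y+y*x)*x
  simp only [mul_add, add_mul, mul_assoc, hz, mul_zero, zero_mul, add_zero, zero_add, h]

lemma hsxs0 (k : Type*) [Field k] : x1 k * x21 k * x1 k = 0 := by
  have h := hx1sq k
  set x := x1 k; set y := x2 k
  have hz : ∀ z : SuperJordanPlane k, x*(x*z) = 0 :=
    fun z => by rw [← mul_assoc, h, zero_mul]
  show x*(x*y+y*x)*x = 0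
  simp only [mul_add, add_mul, mul_assoc, hz, mul_zero, zero_mul, add_zero, zero_add, h]

lemma haux (k : Type*) [Field k] :
    x1 k * x21 k * x2 k + x21 k * (x2 k * x1 k) = x21 k * x21 k := by
  have h := hx1sq k
  set x := x1 k; set y := x2 k
  have hz : ∀ z : SuperJordanPlane k, x*(x*z) = 0 :=
    fun z => by rw [← mul_assoc, h, zero_mul]
  show x*(x*y+y*x)*y + (x*y+y*x)*(y*x) = (x*y+y*x)*(x*y+y*x)
  simp only [mul_add, add_mul, mul_assoc, hz, mul_zero, zero_mul, add_zero, zero_add]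

lemma keygen {A : Type*} [Ring A] (x y s : A) (h2 : y*s = s*y + x*s)
    (hxs : x*s = s*x) (hxsx : x*s*x = 0) (hax : x*s*y + s*(y*x) = s*s) :
    (y*y)*s = s*(y*y) + s*s := by
  calc (y*y)*s = y*(s*y) + y*(x*s) := by rw [mul_assoc, h2, mul_add]
    _ = (y*s)*y + (y*s)*x := by rw [hxs, ← mul_assoc, ← mul_assoc]
    _ = (s*y + x*s)*y + (s*y + x*s)*x := by rw [h2]
    _ = s*(y*y) + (x*s*y + s*(y*x)) + x*s*x := by noncomm_ring
    _ = s*(y*y) + s*s := by rw [hax, hxsx, add_zero]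

lemma key (k : Type*) [Field k] :
    (x2 k ^ 2) * x21 k = x21 k * (x2 k ^ 2) + x21 k * x21 k := by
  rw [sq]
  exact keygen (x1 k) (x2 k) (x21 k) (hcubic k) (hxs k) (hsxs0 k) (haux k)

theorem stmt2 (k : Type*) [Field k] [CharZero k] (n : ℕ) (hn : 1 ≤ n) :
    (x2 k ^ 2) * (x21 k) ^ n - (x21 k) ^ n * (x2 k ^ 2)
      = (n : k) • (x21 k) ^ (n + 1) := by
  induction n, hn using Nat.le_induction with
  | base =>
      rw [pow_one, key k]
      simp [pow_succ, pow_one]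
  | succ n hn ih =>
      have hk := key k
      have ih' : (x2 k ^ 2) * (x21 k) ^ n
          = (x21 k) ^ n * (x2 k ^ 2) + (n : k) • (x21 k) ^ (n+1) := by
        rw [← ih]; abel
      calc (x2 k ^ 2) * (x21 k) ^ (n+1) - (x21 k) ^ (n+1) * (x2 k ^ 2)
          = ((x2 k ^ 2) * (x21 k) ^ n) * x21 k - (x21 k) ^ (n+1) * (x2 k ^ 2) := by
            rw [pow_succ (x21 k) n, ← mul_assoc]
        _ = (x21 k) ^ n * ((x2 k ^ 2) * x21 k) + (n : k) • ((x21 k) ^ (n+1) * x21 k)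
              - (x21 k) ^ (n+1) * (x2 k ^ 2) := by
            rw [ih', add_mul, smul_mul_assoc, mul_assoc]
        _ = (x21 k) ^ n * (x21 k * (x2 k ^ 2) + x21 k * x21 k)
              + (n : k) • ((x21 k) ^ (n+1) * x21 k) - (x21 k) ^ (n+1) * (x2 k ^ 2) := by
            rw [hk]
        _ = ((n+1 : ℕ) : k) • (x21 k) ^ (n+1+1) := by
            rw [mul_add, ← mul_assoc, ← mul_assoc, ← pow_succ (x21 k) n,
              ← pow_succ (x21 k) (n+1)]
            push_cast; module
end

section
/- In the super Jordan plane B, for all natural numbers b ≥ 1 and c ≥ 1 one has x1·x21ᵇ·x2ᶜ = x1·x2·x21ᵇ·x2ᶜ⁻¹. -/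
lemma hx21x1 (k : Type*) [Field k] : x21 k * x1 k = x1 k * x2 k * x1 k := by
  have h := hx1sq k
  simp [x21, add_mul, mul_assoc, h]

lemma hx1pow (k : Type*) [Field k] (n : ℕ) : x1 k * x21 k ^ n * x1 k = 0 := by
  induction n with
  | zero => simp [hx1sq k]
  | succ n ih =>
      rw [pow_succ, ← mul_assoc, mul_assoc (x1 k * x21 k ^ n) (x21 k) (x1 k), hx21x1,
        mul_assoc (x1 k) (x2 k) (x1 k), ← mul_assoc, ih, zero_mul]

lemma hmain (k : Type*) [Field k] (b : ℕ) :
    x1 k * x21 k ^ b * x2 k = x1 k * x2 k * x21 k ^ b := by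
  induction b with
  | zero => simp
  | succ n ih =>
      have h1 : x21 k * x2 k = x2 k * x21 k - x1 k * x21 k := by
        rw [hcubic]; abel
      rw [pow_succ, ← mul_assoc, mul_assoc (x1 k * x21 k ^ n) (x21 k) (x2 k), h1, mul_sub,
        ← mul_assoc (x1 k * x21 k ^ n) (x1 k) (x21 k), hx1pow, zero_mul, sub_zero,
        ← mul_assoc, ih, mul_assoc]

theorem stmt4 (k : Type*) [Field k] [CharZero k] (b c : ℕ) (hb : 1 ≤ b) (hc : 1 ≤ c) :
    x1 k * x21 k ^ b * x2 k ^ c = x1 k * x2 k * x21 k ^ b * x2 k ^ (c - 1) := by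
  obtain ⟨d, rfl⟩ : ∃ d, c = d + 1 := ⟨c - 1, by omega⟩
  rw [pow_succ', ← mul_assoc, hmain]
  simp [mul_assoc]
end

section
/- Let A be the unital subalgebra of the super Jordan plane B generated by x2² and x21. Then B is generated as a right A-module by the set {1, x1, x2, x1·x2}; that is, every element of B lies in 1·A + x1·A + x2·A + (x1·x2)·A. -/
section Aux
variable (k : Type*) [Field k]

local notation "s" => x1 k
local notation "t" => x2 k
local notation "u" => x21 k

lemma sjp_ss : s * s = 0 := by
  have h := RingQuot.mkAlgHom_rel k (SuperJordanRel.quad (k := k))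
  simpa [x1] using h

lemma sjp_rel2 : t * u = u * t + s * u := by
  have h := RingQuot.mkAlgHom_rel k (SuperJordanRel.cubic (k := k))
  simp only [map_sub, map_mul, map_add, map_zero] at h
  have h' : t * u - u * t - s * u = 0 := by
    simpa [x1, x2, x21] using h
  rw [sub_sub, sub_eq_zero] at h'
  exact h'

lemma sjp_hts : t * s = u - s * t := by rw [x21]; abel

lemma sjp_su : s * (t * s) = s * u := by
  rw [x21]; rw [mul_add, ← mul_assoc, ← mul_assoc, sjp_ss, zero_mul, zero_add]

lemma sjp_us : u * s = s * u := by
  rw [x21, add_mul, mul_add, mul_assoc, mul_assoc, sjp_ss, mul_zero, add_zero,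
    ← mul_assoc, ← mul_assoc, sjp_ss, zero_mul, zero_add]

lemma sjp_tts : t * (t * s) = s * (t * t) + s * u := by
  have h := sjp_rel2 k
  have e1 : t * (t * s) = t * u - (t * s) * t := by rw [x21]; noncomm_ring
  rw [e1, h, sjp_hts, sub_mul]
  noncomm_ring

end Aux

section Aux2
variable {k : Type*} [Field k]

local notation "s" => x1 k
local notation "t" => x2 k
local notation "u" => x21 k

private lemma memA_u : u ∈ Algebra.adjoin k {x2 k ^ 2, x21 k} :=
  Algebra.subset_adjoin (by simp)

private lemma memA_t2 : t ^ 2 ∈ Algebra.adjoin k {x2 k ^ 2, x21 k} :=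
  Algebra.subset_adjoin (by simp)

private lemma lemA1 {a : SuperJordanPlane k} (ha : a ∈ Algebra.adjoin k {x2 k ^ 2, x21 k}) :
    ∃ d ∈ Algebra.adjoin k {x2 k ^ 2, x21 k}, a * s = s * d := by
  induction ha using Algebra.adjoin_induction with
  | mem x hx =>
    rcases hx with rfl | hx
    · refine ⟨t ^ 2 + u, add_mem memA_t2 memA_u, ?_⟩
      calc t ^ 2 * s = t * (t * s) := by rw [sq, mul_assoc]
        _ = s * (t * t) + s * u := sjp_tts k
        _ = s * (t ^ 2 + u) := by rw [mul_add, sq]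
    · rcases hx with rfl
      exact ⟨u, memA_u, sjp_us k⟩
  | algebraMap r => exact ⟨algebraMap k _ r, algebraMap_mem _ r, Algebra.commutes r s⟩
  | add x y hx hy ihx ihy =>
    obtain ⟨dx, hdx, ex⟩ := ihx
    obtain ⟨dy, hdy, ey⟩ := ihy
    exact ⟨dx + dy, add_mem hdx hdy, by rw [add_mul, ex, ey, mul_add]⟩
  | mul x y hx hy ihx ihy =>
    obtain ⟨dx, hdx, ex⟩ := ihx
    obtain ⟨dy, hdy, ey⟩ := ihy
    refine ⟨dx * dy, mul_mem hdx hdy, ?_⟩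
    calc x * y * s = x * (y * s) := mul_assoc _ _ _
      _ = x * (s * dy) := by rw [ey]
      _ = (x * s) * dy := by rw [mul_assoc]
      _ = (s * dx) * dy := by rw [ex]
      _ = s * (dx * dy) := mul_assoc _ _ _

private lemma lemA2 {a : SuperJordanPlane k} (ha : a ∈ Algebra.adjoin k {x2 k ^ 2, x21 k}) :
    ∃ b ∈ Algebra.adjoin k {x2 k ^ 2, x21 k}, ∃ c ∈ Algebra.adjoin k {x2 k ^ 2, x21 k},
      a * t = t * b + s * c := by
  induction ha using Algebra.adjoin_induction with
  | mem x hx =>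
    rcases hx with rfl | hx
    · refine ⟨t ^ 2, memA_t2, 0, zero_mem _, ?_⟩
      rw [mul_zero, add_zero, sq]
      noncomm_ring
    · rcases hx with rfl
      refine ⟨u, memA_u, -u, neg_mem memA_u, ?_⟩
      have h := sjp_rel2 k
      have hn : s * (-u) = -(s * u) := by exact mul_neg s u
      rw [h, hn]
      abel
  | algebraMap r =>
    exact ⟨algebraMap k _ r, algebraMap_mem _ r, 0, zero_mem _, by
      rw [mul_zero, add_zero]; exact Algebra.commutes r t⟩
  | add x y hx hy ihx ihy =>
    obtain ⟨bx, hbx, cx, hcx, ex⟩ := ihx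
    obtain ⟨by', hby, cy, hcy, ey⟩ := ihy
    refine ⟨bx + by', add_mem hbx hby, cx + cy, add_mem hcx hcy, ?_⟩
    rw [add_mul, ex, ey]
    noncomm_ring
  | mul x y hx hy ihx ihy =>
    obtain ⟨bx, hbx, cx, hcx, ex⟩ := ihx
    obtain ⟨by', hby, cy, hcy, ey⟩ := ihy
    obtain ⟨dx, hdx, edx⟩ := lemA1 hx
    refine ⟨bx * by', mul_mem hbx hby, cx * by' + dx * cy,
      add_mem (mul_mem hcx hby) (mul_mem hdx hcy), ?_⟩
    calc x * y * t = x * (y * t) := mul_assoc _ _ _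
      _ = x * (t * by' + s * cy) := by rw [ey]
      _ = (x * t) * by' + (x * s) * cy := by noncomm_ring
      _ = (t * bx + s * cx) * by' + (s * dx) * cy := by rw [ex, edx]
      _ = t * (bx * by') + s * (cx * by' + dx * cy) := by noncomm_ring

/-- The predicate: `y` lies in `A + x1·A + x2·A + x1x2·A`. -/
def SJP.P (k : Type*) [Field k] (y : SuperJordanPlane k) : Prop :=
  ∃ a₁ ∈ Algebra.adjoin k {x2 k ^ 2, x21 k},
    ∃ a₂ ∈ Algebra.adjoin k {x2 k ^ 2, x21 k},
      ∃ a₃ ∈ Algebra.adjoin k {x2 k ^ 2, x21 k},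
        ∃ a₄ ∈ Algebra.adjoin k {x2 k ^ 2, x21 k},
          y = 1 * a₁ + x1 k * a₂ + x2 k * a₃ + (x1 k * x2 k) * a₄

private lemma P_one : SJP.P k 1 :=
  ⟨1, one_mem _, 0, zero_mem _, 0, zero_mem _, 0, zero_mem _, by simp⟩

private lemma P_add {y z : SuperJordanPlane k} (hy : SJP.P k y) (hz : SJP.P k z) :
    SJP.P k (y + z) := by
  obtain ⟨a₁, h₁, a₂, h₂, a₃, h₃, a₄, h₄, rfl⟩ := hy
  obtain ⟨b₁, g₁, b₂, g₂, b₃, g₃, b₄, g₄, rfl⟩ := hz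
  exact ⟨a₁ + b₁, add_mem h₁ g₁, a₂ + b₂, add_mem h₂ g₂, a₃ + b₃, add_mem h₃ g₃,
    a₄ + b₄, add_mem h₄ g₄, by noncomm_ring⟩

private lemma P_algmul {y : SuperJordanPlane k} (hy : SJP.P k y) (r : k) :
    SJP.P k (y * algebraMap k (SuperJordanPlane k) r) := by
  obtain ⟨a₁, h₁, a₂, h₂, a₃, h₃, a₄, h₄, rfl⟩ := hy
  exact ⟨a₁ * algebraMap k _ r, mul_mem h₁ (algebraMap_mem _ r),
    a₂ * algebraMap k _ r, mul_mem h₂ (algebraMap_mem _ r),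
    a₃ * algebraMap k _ r, mul_mem h₃ (algebraMap_mem _ r),
    a₄ * algebraMap k _ r, mul_mem h₄ (algebraMap_mem _ r), by noncomm_ring⟩

private lemma P_mulx1 {y : SuperJordanPlane k} (hy : SJP.P k y) : SJP.P k (y * s) := by
  obtain ⟨a₁, h₁, a₂, h₂, a₃, h₃, a₄, h₄, rfl⟩ := hy
  obtain ⟨d₁, hd₁, e₁⟩ := lemA1 h₁
  obtain ⟨d₂, hd₂, e₂⟩ := lemA1 h₂
  obtain ⟨d₃, hd₃, e₃⟩ := lemA1 h₃
  obtain ⟨d₄, hd₄, e₄⟩ := lemA1 h₄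
  refine ⟨u * d₃, mul_mem memA_u hd₃, d₁ + u * d₄, add_mem hd₁ (mul_mem memA_u hd₄),
    0, zero_mem _, -d₃, neg_mem hd₃, ?_⟩
  calc (1 * a₁ + s * a₂ + t * a₃ + (s * t) * a₄) * s
      = a₁ * s + s * (a₂ * s) + t * (a₃ * s) + s * (t * (a₄ * s)) := by noncomm_ring
    _ = s * d₁ + s * (s * d₂) + t * (s * d₃) + s * (t * (s * d₄)) := by
        rw [e₁, e₂, e₃, e₄]
    _ = s * d₁ + (s * s) * d₂ + (t * s) * d₃ + (s * (t * s)) * d₄ := by noncomm_ring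
    _ = s * d₁ + 0 * d₂ + (u - s * t) * d₃ + (s * u) * d₄ := by
        rw [sjp_ss, sjp_su, sjp_hts]
    _ = 1 * (u * d₃) + s * (d₁ + u * d₄) + t * 0 + (s * t) * (-d₃) := by
        have hn : (s * t) * (-d₃) = -((s * t) * d₃) := by exact mul_neg (s * t) d₃
        have hn2 : (u - s * t) * d₃ = u * d₃ - (s * t) * d₃ := by exact sub_mul _ _ _
        rw [hn, hn2]
        noncomm_ring

private lemma P_mulx2 {y : SuperJordanPlane k} (hy : SJP.P k y) : SJP.P k (y * t) := by
  obtain ⟨a₁, h₁, a₂, h₂, a₃, h₃, a₄, h₄, rfl⟩ := hy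
  obtain ⟨b₁, hb₁, c₁, hc₁, e₁⟩ := lemA2 h₁
  obtain ⟨b₂, hb₂, c₂, hc₂, e₂⟩ := lemA2 h₂
  obtain ⟨b₃, hb₃, c₃, hc₃, e₃⟩ := lemA2 h₃
  obtain ⟨b₄, hb₄, c₄, hc₄, e₄⟩ := lemA2 h₄
  refine ⟨t ^ 2 * b₃ + u * c₃, add_mem (mul_mem memA_t2 hb₃) (mul_mem memA_u hc₃),
    c₁ + t ^ 2 * b₄ + u * c₄,
    add_mem (add_mem hc₁ (mul_mem memA_t2 hb₄)) (mul_mem memA_u hc₄),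
    b₁, hb₁, b₂ - c₃, sub_mem hb₂ hc₃, ?_⟩
  calc (1 * a₁ + s * a₂ + t * a₃ + (s * t) * a₄) * t
      = a₁ * t + s * (a₂ * t) + t * (a₃ * t) + s * (t * (a₄ * t)) := by noncomm_ring
    _ = (t * b₁ + s * c₁) + s * (t * b₂ + s * c₂) + t * (t * b₃ + s * c₃)
          + s * (t * (t * b₄ + s * c₄)) := by rw [e₁, e₂, e₃, e₄]
    _ = t * b₁ + s * c₁ + (s * t) * b₂ + (s * s) * c₂ + (t * t) * b₃ + (t * s) * c₃
          + (s * (t * t)) * b₄ + (s * (t * s)) * c₄ := by noncomm_ring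
    _ = t * b₁ + s * c₁ + (s * t) * b₂ + 0 * c₂ + (t * t) * b₃ + (u - s * t) * c₃
          + (s * (t * t)) * b₄ + (s * u) * c₄ := by rw [sjp_ss, sjp_su, sjp_hts]
    _ = 1 * (t ^ 2 * b₃ + u * c₃) + s * (c₁ + t ^ 2 * b₄ + u * c₄) + t * b₁
          + (s * t) * (b₂ - c₃) := by
        have hn : (s * t) * (b₂ - c₃) = (s * t) * b₂ - (s * t) * c₃ := by exact mul_sub _ _ _
        have hn2 : (u - s * t) * c₃ = u * c₃ - (s * t) * c₃ := by exact sub_mul _ _ _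
        rw [hn, hn2]
        noncomm_ring

private lemma P_all (y : SuperJordanPlane k) : SJP.P k y := by
  obtain ⟨z, rfl⟩ := RingQuot.mkAlgHom_surjective k (SuperJordanRel k) y
  suffices h : ∀ w : FreeAlgebra k (Fin 2), ∀ v : SuperJordanPlane k, SJP.P k v →
      SJP.P k (v * RingQuot.mkAlgHom k (SuperJordanRel k) w) by
    have := h z 1 P_one
    rwa [one_mul] at this
  intro w
  induction w using FreeAlgebra.induction with
  | grade0 r =>
    intro v hv
    rw [AlgHom.commutes]
    exact P_algmul hv r
  | grade1 i =>
    intro v hv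
    fin_cases i
    · exact P_mulx1 hv
    · exact P_mulx2 hv
  | mul a b iha ihb =>
    intro v hv
    rw [map_mul, ← mul_assoc]
    exact ihb _ (iha _ hv)
  | add a b iha ihb =>
    intro v hv
    rw [map_add, mul_add]
    exact P_add (iha _ hv) (ihb _ hv)

end Aux2

theorem stmt5 (k : Type*) [Field k] [CharZero k] (y : SuperJordanPlane k) :
    ∃ a₁ ∈ Algebra.adjoin k {x2 k ^ 2, x21 k},
      ∃ a₂ ∈ Algebra.adjoin k {x2 k ^ 2, x21 k},
        ∃ a₃ ∈ Algebra.adjoin k {x2 k ^ 2, x21 k},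
          ∃ a₄ ∈ Algebra.adjoin k {x2 k ^ 2, x21 k},
            y = 1 * a₁ + x1 k * a₂ + x2 k * a₃ + (x1 k * x2 k) * a₄ := by
  exact P_all y
end

section
/- Let (X1, X2) be a representation of the super Jordan plane on a k-vector space V, and let V0 := ker X1. Then the subspace W := (X2 V0) ∩ V0 is a submodule of V, i.e., W is invariant under both X1 and X2. -/
/-- A subspace `W` is a submodule for the representation `(X1, X2)` of the super Jordan
plane if it is invariant under both `X1` and `X2`. -/
def IsSubrep {k V : Type*} [Field k] [AddCommGroup V] [Module k V]
    (X1 X2 : Module.End k V) (W : Submodule k V) : Prop :=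
  Submodule.map X1 W ≤ W ∧ Submodule.map X2 W ≤ W

/-- The representation `(X1, X2)` is indecomposable: `V ≠ 0` and `V` is not the direct
sum of two nonzero submodules. -/
def IsIndecomposable {k V : Type*} [Field k] [AddCommGroup V] [Module k V]
    (X1 X2 : Module.End k V) : Prop :=
  Nontrivial V ∧ ¬ ∃ W L : Submodule k V, IsSubrep X1 X2 W ∧ IsSubrep X1 X2 L ∧
    W ≠ ⊥ ∧ L ≠ ⊥ ∧ IsCompl W L

theorem stmt6 (k V : Type*) [Field k] [CharZero k] [AddCommGroup V] [Module k V]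
    (X1 X2 : Module.End k V) (h1 : X1 * X1 = 0)
    (h2 : X2 ^ 2 * X1 = X1 * X2 ^ 2 + X1 * X2 * X1) :
    IsSubrep X1 X2 (Submodule.map X2 (LinearMap.ker X1) ⊓ LinearMap.ker X1) := by
  constructor
  · rintro x ⟨w, ⟨-, hwk⟩, rfl⟩
    have : X1 w = 0 := hwk
    simp [this]
  · rintro x ⟨w, ⟨⟨v, hv, rfl⟩, hwk⟩, rfl⟩
    refine ⟨⟨X2 v, hwk, rfl⟩, ?_⟩
    have hv0 : X1 v = 0 := hv
    have := congrArg (fun f : Module.End k V => f v) h2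
    simp only [Module.End.mul_apply, pow_two, hv0, map_zero] at this
    simpa [LinearMap.mem_ker, pow_two, Module.End.mul_apply, hv0] using this.symm
end

section
/- Let (X1, X2) be a representation of the super Jordan plane on a k-vector space V, and let V0 := ker X1. Then the subspace U := (X2 V0) + V0 is a submodule of V, i.e., U is invariant under both X1 and X2. -/
theorem stmt7 (k V : Type*) [Field k] [CharZero k] [AddCommGroup V] [Module k V]
    (X1 X2 : Module.End k V) (h1 : X1 * X1 = 0)
    (h2 : X2 ^ 2 * X1 = X1 * X2 ^ 2 + X1 * X2 * X1) :
    IsSubrep X1 X2 (Submodule.map X2 (LinearMap.ker X1) ⊔ LinearMap.ker X1) := by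
  constructor
  · rw [Submodule.map_sup]
    apply sup_le
    · -- X1 (X2 V0) ⊆ V0 ⊆ U
      refine le_trans ?_ le_sup_right
      rintro x ⟨y, ⟨v, hv, rfl⟩, rfl⟩
      simp only [SetLike.mem_coe, LinearMap.mem_ker] at hv
      rw [LinearMap.mem_ker]
      have : (X1 * X1) (X2 v) = 0 := by rw [h1]; rfl
      simpa [Module.End.mul_apply] using this
    · refine le_trans ?_ le_sup_right
      rintro x ⟨v, hv, rfl⟩
      simp only [SetLike.mem_coe, LinearMap.mem_ker] at hv
      rw [LinearMap.mem_ker]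
      simp [hv]
  · rw [Submodule.map_sup]
    apply sup_le
    · -- X2 (X2 V0) ⊆ V0 ⊆ U
      refine le_trans ?_ le_sup_right
      rintro x ⟨y, ⟨v, hv, rfl⟩, rfl⟩
      simp only [SetLike.mem_coe, LinearMap.mem_ker] at hv
      rw [LinearMap.mem_ker]
      have h3 : X1 * X2 ^ 2 = X2 ^ 2 * X1 - X1 * X2 * X1 := by rw [h2, add_sub_cancel_right]
      have : (X1 * X2 ^ 2) v = 0 := by
        rw [h3]
        simp [Module.End.mul_apply, hv]
      simpa [Module.End.mul_apply, pow_two] using this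
    · exact le_sup_left
end

section
/- Let k be algebraically closed of characteristic 0 and let (X1, X2) be a simple representation of the super Jordan plane on a finite-dimensional k-vector space V. Then X1 = 0, i.e., V = ker X1. -/
theorem stmt8 (k V : Type*) [Field k] [IsAlgClosed k] [CharZero k]
    [AddCommGroup V] [Module k V] [FiniteDimensional k V]
    (X1 X2 : Module.End k V) (h1 : X1 * X1 = 0)
    (h2 : X2 ^ 2 * X1 = X1 * X2 ^ 2 + X1 * X2 * X1)
    (hsimple : Nontrivial V ∧
      ∀ W : Submodule k V, IsSubrep X1 X2 W → W = ⊥ ∨ W = ⊤) :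
    X1 = 0 := by
  obtain ⟨hV, hsub⟩ := hsimple
  obtain ⟨a, ha⟩ : ∃ a : Module.End k V, a = X1 * X2 + X2 * X1 := ⟨_, rfl⟩
  -- a commutes with X1
  have haX1 : a * X1 = X1 * a := by
    have e : a * X1 - X1 * a = X2 * (X1 * X1) - (X1 * X1) * X2 := by
      rw [ha]; noncomm_ring
    rw [h1, mul_zero, zero_mul, sub_zero] at e
    exact sub_eq_zero.mp e
  -- commutation of X2 with a
  have hX2a : X2 * a = a * X2 + a * X1 := by
    have e : X2 * a - (a * X2 + a * X1) =
        (X2 ^ 2 * X1 - (X1 * X2 ^ 2 + X1 * X2 * X1)) - X2 * (X1 * X1) := by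
      rw [ha]; noncomm_ring
    rw [h2, sub_self, h1, mul_zero, sub_zero] at e
    exact sub_eq_zero.mp e
  -- trace computations
  have hrel : X1 * X2 * X1 = X2 ^ 2 * X1 - X1 * X2 ^ 2 := by
    rw [h2]; noncomm_ring
  have t0 : LinearMap.trace k V (X2 * X1 * X2 * X1) = 0 := by
    have e : X2 * X1 * X2 * X1 = X2 * (X2 ^ 2 * X1) - X2 * (X1 * X2 ^ 2) := by
      rw [← mul_sub, ← hrel]; noncomm_ring
    have e1 : X2 * (X2 ^ 2 * X1) = X2 ^ 3 * X1 := by noncomm_ring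
    have e2 : X1 * X2 ^ 2 * X2 = X1 * X2 ^ 3 := by noncomm_ring
    rw [e, map_sub, e1, LinearMap.trace_mul_comm k (X2 ^ 3) X1,
        LinearMap.trace_mul_comm k X2 (X1 * X2 ^ 2), e2, sub_self]
  have ta2 : LinearMap.trace k V (a * a) = 0 := by
    have e : a * a = X1 * (X2 * X1 * X2) + X1 * (X2 * X2 * X1) + X2 * (X1 * X1) * X2
        + X2 * X1 * X2 * X1 := by
      rw [ha]; noncomm_ring
    have e4 : X2 * X2 * X1 * X1 = X2 * X2 * (X1 * X1) := by noncomm_ring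
    rw [e, h1, mul_zero, zero_mul, map_add, map_add, map_add, map_zero,
        LinearMap.trace_mul_comm k X1 (X2 * X1 * X2),
        LinearMap.trace_mul_comm k X1 (X2 * X2 * X1), t0, e4, h1, mul_zero, map_zero]
    abel
  -- eigenvalue of a
  obtain ⟨μ, hμ⟩ := Module.End.exists_eigenvalue a
  obtain ⟨b, hb⟩ : ∃ b : Module.End k V, b = a - algebraMap k (Module.End k V) μ := ⟨_, rfl⟩
  have hbX1 : b * X1 = X1 * b := by
    rw [hb, sub_mul, mul_sub, haX1, Algebra.commutes]
  have hba : b * a = a * b := by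
    rw [hb, sub_mul, mul_sub, Algebra.commutes]
  have hbX2 : b * X2 = X2 * b - a * X1 := by
    rw [hb, sub_mul, mul_sub, hX2a, Algebra.commutes]
    abel
  have h1c : Commute a b := hba.symm
  have h2c : Commute X1 b := hbX1.symm
  have hcomm : Commute (a * X1) b := h1c.mul_left h2c
  -- key induction formula
  have key : ∀ m : ℕ, b ^ (m + 1) * X2 = X2 * b ^ (m + 1) - (m + 1) • (a * X1 * b ^ m) := by
    intro m
    induction m with
    | zero => simpa using hbX2
    | succ n ih =>
      have hc : b ^ (n + 1) * (a * X1) = a * X1 * b ^ (n + 1) :=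
        ((hcomm.pow_right (n + 1)).symm : _)
      calc b ^ (n + 1 + 1) * X2 = b ^ (n + 1) * (b * X2) := by
            rw [← mul_assoc, ← pow_succ]
        _ = b ^ (n + 1) * (X2 * b) - b ^ (n + 1) * (a * X1) := by rw [hbX2, mul_sub]
        _ = b ^ (n + 1) * X2 * b - a * X1 * b ^ (n + 1) := by rw [← mul_assoc, hc]
        _ = (X2 * b ^ (n + 1) - (n + 1) • (a * X1 * b ^ n)) * b - a * X1 * b ^ (n + 1) := by
            rw [ih]
        _ = X2 * b ^ (n + 1 + 1) - (n + 1) • (a * X1 * b ^ (n + 1)) - a * X1 * b ^ (n + 1) := by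
            rw [sub_mul, smul_mul_assoc, mul_assoc X2, mul_assoc (a * X1), ← pow_succ, ← pow_succ]
        _ = X2 * b ^ (n + 1 + 1) - (n + 1 + 1) • (a * X1 * b ^ (n + 1)) := by
            rw [succ_nsmul (a * X1 * b ^ (n + 1)) (n + 1)]; abel
  set N := Module.finrank k V with hN
  have hNpos : 0 < N := Module.finrank_pos
  -- the generalized eigenspace is a subrep
  have hker : IsSubrep X1 X2 (LinearMap.ker (b ^ N)) := by
    constructor
    · intro x hx
      obtain ⟨v, hv, rfl⟩ := hx
      simp only [SetLike.mem_coe, LinearMap.mem_ker] at hv ⊢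
      have hcN : b ^ N * X1 = X1 * b ^ N := ((h2c.pow_right N).symm : _)
      calc (b ^ N) (X1 v) = (b ^ N * X1) v := rfl
        _ = (X1 * b ^ N) v := by rw [hcN]
        _ = X1 ((b ^ N) v) := rfl
        _ = 0 := by rw [hv, map_zero]
    · intro x hx
      obtain ⟨v, hv, rfl⟩ := hx
      simp only [SetLike.mem_coe, LinearMap.mem_ker] at hv ⊢
      have h5 : (b ^ (N + 1)) (X2 v) = 0 := by
        have e := LinearMap.congr_fun (key N) v
        simp only [Module.End.mul_apply, LinearMap.sub_apply, LinearMap.smul_apply] at e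
        have e1 : (b ^ (N + 1)) v = 0 := by
          rw [pow_succ', Module.End.mul_apply, hv, map_zero]
        have e2 : a (X1 ((b ^ N) v)) = 0 := by rw [hv, map_zero, map_zero]
        rw [e1, map_zero, e2, smul_zero, sub_zero] at e
        exact e
      have := Module.End.ker_pow_eq_ker_pow_finrank_of_le (f := b) (m := N + 1)
        (by rw [hN]; omega)
      rw [← hN] at this
      have hmem : X2 v ∈ LinearMap.ker (b ^ (N + 1)) := h5
      rw [this] at hmem
      exact hmem
  -- the generalized eigenspace is nonzero, hence everything: b is nilpotent
  obtain ⟨v, hv1, hv0⟩ := hμ.exists_hasEigenvector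
  have hav : a v = μ • v := Module.End.HasEigenvector.apply_eq_smul ⟨hv1, hv0⟩
  have hvb : b v = 0 := by
    rw [hb, LinearMap.sub_apply, Module.algebraMap_end_apply, hav, sub_self]
  have hvker : v ∈ LinearMap.ker (b ^ N) := by
    rw [LinearMap.mem_ker]
    obtain ⟨n, hn⟩ := Nat.exists_eq_succ_of_ne_zero hNpos.ne'
    rw [hn, pow_succ, Module.End.mul_apply, hvb, map_zero]
  have hbN : b ^ N = 0 := by
    rcases hsub _ hker with h | h
    · exact absurd (h ▸ hvker) (by simpa using hv0)
    · exact LinearMap.ker_eq_top.mp h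
  -- traces force μ = 0
  have hbnil : IsNilpotent b := ⟨N, hbN⟩
  have htb : LinearMap.trace k V b = 0 := (LinearMap.isNilpotent_trace_of_isNilpotent hbnil).eq_zero
  have htb2 : LinearMap.trace k V (b * b) = 0 :=
    (LinearMap.isNilpotent_trace_of_isNilpotent
      ((Commute.refl b).isNilpotent_mul_right hbnil)).eq_zero
  have ha_eq : a = b + μ • (1 : Module.End k V) := by
    rw [hb, Algebra.algebraMap_eq_smul_one, sub_add_cancel]
  have hμ0 : μ = 0 := by
    rw [ha_eq] at ta2
    have expand : (b + μ • (1 : Module.End k V)) * (b + μ • (1 : Module.End k V)) =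
        b * b + μ • b + μ • b + (μ * μ) • (1 : Module.End k V) := by
      simp only [mul_add, add_mul, smul_mul_assoc, mul_smul_comm, smul_add, one_mul, mul_one, smul_smul]
      abel
    rw [expand] at ta2
    simp only [map_add, map_smul, smul_eq_mul, htb, htb2, LinearMap.trace_one,
      mul_zero, add_zero, zero_add] at ta2
    have hNne : ((Module.finrank k V : k)) ≠ 0 := Nat.cast_ne_zero.mpr hNpos.ne'
    rcases mul_eq_zero.mp ta2 with h | h
    · exact mul_self_eq_zero.mp h
    · exact absurd h hNne
  have haN : a ^ N = 0 := by
    rw [hμ0, map_zero, sub_zero] at hb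
    rwa [← hb]
  -- ker a is a subrep, so a = 0
  have haX1' : ∀ w, a w = 0 → a (X1 w) = 0 := by
    intro w hw
    calc a (X1 w) = (a * X1) w := rfl
      _ = (X1 * a) w := by rw [haX1]
      _ = X1 (a w) := rfl
      _ = 0 := by rw [hw, map_zero]
  have hkera : IsSubrep X1 X2 (LinearMap.ker a) := by
    constructor
    · intro x hx
      obtain ⟨w, hw, rfl⟩ := hx
      simp only [SetLike.mem_coe, LinearMap.mem_ker] at hw ⊢
      exact haX1' w hw
    · intro x hx
      obtain ⟨w, hw, rfl⟩ := hx
      simp only [SetLike.mem_coe, LinearMap.mem_ker] at hw ⊢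
      have e : a * X2 = X2 * a - a * X1 := by rw [hX2a]; abel
      calc a (X2 w) = (a * X2) w := rfl
        _ = (X2 * a - a * X1) w := by rw [e]
        _ = X2 (a w) - (a * X1) w := rfl
        _ = 0 := by
            rw [hw, map_zero, haX1, Module.End.mul_apply, hw, map_zero, sub_zero]
  have hkera_ne : LinearMap.ker a ≠ ⊥ := by
    intro hbot
    have hinj : Function.Injective a := LinearMap.ker_eq_bot.mp hbot
    have hinjN : Function.Injective (a ^ N : Module.End k V) := by
      intro x y hxy
      rw [Module.End.pow_apply, Module.End.pow_apply] at hxy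
      exact hinj.iterate N hxy
    obtain ⟨x, y, hxy⟩ := hV
    exact hxy (hinjN (by rw [haN]; rfl))
  have ha0 : a = 0 := by
    rcases hsub _ hkera with h | h
    · exact absurd h hkera_ne
    · exact LinearMap.ker_eq_top.mp h
  -- now X1 X2 = - X2 X1 and ker X1 is a subrep
  have hanti : X1 * X2 = -(X2 * X1) := by
    rw [ha] at ha0
    exact eq_neg_of_add_eq_zero_left ha0
  have hkerX1 : IsSubrep X1 X2 (LinearMap.ker X1) := by
    constructor
    · intro x hx
      obtain ⟨w, _, rfl⟩ := hx
      simp only [SetLike.mem_coe, LinearMap.mem_ker]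
      calc X1 (X1 w) = (X1 * X1) w := rfl
        _ = 0 := by rw [h1]; rfl
    · intro x hx
      obtain ⟨w, hw, rfl⟩ := hx
      simp only [SetLike.mem_coe, LinearMap.mem_ker] at hw ⊢
      calc X1 (X2 w) = (X1 * X2) w := rfl
        _ = (-(X2 * X1)) w := by rw [hanti]
        _ = -(X2 (X1 w)) := rfl
        _ = 0 := by rw [hw, map_zero, neg_zero]
  have hkerX1_ne : LinearMap.ker X1 ≠ ⊥ := by
    intro hbot
    have hinj : Function.Injective X1 := LinearMap.ker_eq_bot.mp hbot
    obtain ⟨x, y, hxy⟩ := hV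
    have hz : ∀ w, X1 w = 0 := by
      intro w
      apply hinj
      rw [map_zero]
      calc X1 (X1 w) = (X1 * X1) w := rfl
        _ = 0 := by rw [h1]; rfl
    exact hxy (hinj (by rw [hz x, hz y]))
  rcases hsub _ hkerX1 with h | h
  · exact absurd h hkerX1_ne
  · exact LinearMap.ker_eq_top.mp h
end

section
/- Let k be algebraically closed of characteristic 0 and let (X1, X2) be a simple representation of the super Jordan plane on a finite-dimensional k-vector space V. Then dim V = 1; consequently X1 = 0 and X2 is a scalar a·id for a unique a ∈ k. -/
open Module Polynomial LinearMap

lemma auxX1 {k V : Type*} [Field k] [CharZero k]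
    [AddCommGroup V] [Module k V] [FiniteDimensional k V]
    (X1 X2 : Module.End k V) (h1 : X1 * X1 = 0)
    (h2 : X2 ^ 2 * X1 = X1 * X2 ^ 2 + X1 * X2 * X1)
    (hnt : Nontrivial V)
    (hsimp : ∀ W : Submodule k V, (Submodule.map X1 W ≤ W ∧ Submodule.map X2 W ≤ W) → W = ⊥ ∨ W = ⊤) :
    X1 = 0 := by
  by_cases hX1 : X1 = 0
  · exact hX1
  exfalso
  set N : Submodule k V := LinearMap.ker X1 ⊓ LinearMap.ker (X1 * X2) with hNdef
  have h2' : X1 * X2 ^ 2 = X2 ^ 2 * X1 - X1 * X2 * X1 := by rw [h2, add_sub_cancel_right]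
  have hNsub : Submodule.map X1 N ≤ N ∧ Submodule.map X2 N ≤ N := by
    constructor
    · rintro _ ⟨v, hv, rfl⟩
      have hv1 : X1 v = 0 := (Submodule.mem_inf.mp hv).1
      simp [hNdef, Submodule.mem_inf, LinearMap.mem_ker, hv1]
    · rintro _ ⟨v, hv, rfl⟩
      obtain ⟨hv1, hv2⟩ := Submodule.mem_inf.mp hv
      rw [LinearMap.mem_ker] at hv1 hv2
      refine Submodule.mem_inf.mpr ⟨?_, ?_⟩
      · rw [LinearMap.mem_ker]
        simpa [Module.End.mul_apply] using hv2
      · rw [LinearMap.mem_ker]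
        have : (X1 * X2 ^ 2) v = 0 := by
          rw [h2']
          simp [Module.End.mul_apply, hv1]
        simpa [Module.End.mul_apply, pow_two] using this
  rcases hsimp N hNsub with hNbot | hNtop
  swap
  · apply hX1
    ext v
    have hv : v ∈ N := hNtop ▸ Submodule.mem_top
    simpa using (Submodule.mem_inf.mp hv).1
  -- now N = ⊥, derive False
  obtain ⟨v0, hv0⟩ : ∃ v, X1 v ≠ 0 := by
    by_contra h
    push_neg at h
    exact hX1 (LinearMap.ext h)
  set K : Submodule k V := LinearMap.ker X1 with hKdef
  have humem : X1 v0 ∈ K := by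
    rw [hKdef, LinearMap.mem_ker]
    have : (X1 * X1) v0 = 0 := by rw [h1]; rfl
    simpa [Module.End.mul_apply] using this
  set u : K := ⟨X1 v0, humem⟩ with hu
  have hune : u ≠ 0 := by
    intro h
    exact hv0 (by simpa [hu, Subtype.ext_iff] using h)
  have hPmem : ∀ x ∈ K, (X1 * X2) x ∈ K := by
    intro x _
    rw [hKdef, LinearMap.mem_ker]
    show X1 ((X1 * X2) x) = 0
    have : (X1 * (X1 * X2)) x = 0 := by rw [← mul_assoc, h1]; simp
    simpa [Module.End.mul_apply] using this
  have hQmem : ∀ x ∈ K, (X2 * X2) x ∈ K := by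
    intro x hx
    rw [hKdef, LinearMap.mem_ker] at hx ⊢
    have : (X1 * X2 ^ 2) x = 0 := by
      rw [h2']; simp [Module.End.mul_apply, hx]
    simpa [Module.End.mul_apply, pow_two] using this
  set P : Module.End k K := (X1 * X2).restrict hPmem with hPdef
  set Q : Module.End k K := (X2 * X2).restrict hQmem with hQdef
  have hrel : Q * P = P * Q + P * P := by
    ext x
    have hx := DFunLike.congr_fun h2 (X2 (x : V))
    simp only [Module.End.mul_apply, LinearMap.add_apply, pow_two] at hx
    simp only [hPdef, hQdef, Module.End.mul_apply, LinearMap.add_apply,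
      LinearMap.restrict_coe_apply, Submodule.coe_add]
    simpa [Module.End.mul_apply] using hx
  have hPinj : Function.Injective P := by
    rw [← LinearMap.ker_eq_bot]
    rw [eq_bot_iff]
    intro a ha
    rw [LinearMap.mem_ker] at ha
    have ha' : (X1 * X2) (a : V) = 0 := by
      have := congrArg (Subtype.val) ha
      simpa [hPdef, LinearMap.restrict_coe_apply] using this
    have haN : (a : V) ∈ N := Submodule.mem_inf.mpr ⟨a.2, LinearMap.mem_ker.mpr ha'⟩
    rw [hNbot, Submodule.mem_bot] at haN
    exact (Submodule.mem_bot k).mpr (Subtype.ext haN)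
  have hcomm : ∀ n : ℕ, Q * P ^ n = P ^ n * Q + n • P ^ (n + 1) := by
    intro n
    induction n with
    | zero => simp
    | succ n ih =>
      calc Q * P ^ (n + 1) = (Q * P ^ n) * P := by rw [pow_succ, mul_assoc]
        _ = (P ^ n * Q + n • P ^ (n + 1)) * P := by rw [ih]
        _ = P ^ n * (Q * P) + n • P ^ (n + 2) := by
            rw [add_mul, smul_mul_assoc, mul_assoc, ← pow_succ]
        _ = P ^ n * (P * Q + P * P) + n • P ^ (n + 2) := by rw [hrel]
        _ = P ^ (n + 1) * Q + P ^ (n + 2) + n • P ^ (n + 2) := by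
            rw [mul_add, ← mul_assoc, ← mul_assoc, ← pow_succ, ← pow_succ]
        _ = P ^ (n + 1) * Q + (n + 1) • P ^ (n + 2) := by
            rw [add_assoc, succ_nsmul']
  set T := LinearMap.trace k K with hT
  have htr2 : ∀ m : ℕ, 2 ≤ m → T (P ^ m) = 0 := by
    intro m hm
    obtain ⟨n, rfl⟩ : ∃ n, m = n + 1 := ⟨m - 1, by omega⟩
    have h := congrArg T (hcomm n)
    rw [map_add, map_nsmul, LinearMap.trace_mul_comm] at h
    have : (n : k) * T (P ^ (n + 1)) = 0 := by
      have := (left_eq_add.mp h)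
      rwa [nsmul_eq_mul] at this
    have hn : (n : k) ≠ 0 := Nat.cast_ne_zero.mpr (by omega)
    exact (mul_eq_zero.mp this).resolve_left hn
  -- Cayley-Hamilton
  set p := LinearMap.charpoly P with hp
  have hch : aeval P p = 0 := LinearMap.aeval_self_charpoly P
  have hc0 : p.coeff 0 ≠ 0 := by
    intro h
    have := ((LinearMap.hasEigenvalue_zero_tfae P).out 2 5).mp
      (by rwa [constantCoeff_apply])
    obtain ⟨m, hm0, hm⟩ := this
    exact hm0 (hPinj (by simpa using hm))
  have hsum : ∑ i ∈ Finset.range (p.natDegree + 1), p.coeff i • P ^ i = 0 := by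
    rw [← Polynomial.aeval_eq_sum_range]; exact hch
  have t1 : T P = 0 := by
    have h' : ∑ i ∈ Finset.range (p.natDegree + 1), p.coeff i • P ^ (i + 1) = 0 := by
      have := congrArg (fun f => P * f) hsum
      simpa [Finset.mul_sum, mul_smul_comm, ← pow_succ'] using this
    have h'' := congrArg T h'
    rw [map_sum] at h''
    simp only [map_smul, smul_eq_mul] at h''
    rw [Finset.sum_eq_single 0 (fun i _ hi => by
        rw [htr2 (i + 1) (by omega), mul_zero])
      (fun h => absurd (Finset.mem_range.mpr (by omega)) h)] at h''
    rw [pow_one, map_zero] at h''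
    exact (mul_eq_zero.mp h'').resolve_left hc0
  have htr1 : ∀ m : ℕ, 1 ≤ m → T (P ^ m) = 0 := by
    intro m hm
    rcases eq_or_lt_of_le hm with h | h
    · rw [← h, pow_one]; exact t1
    · exact htr2 m h
  have hfin := congrArg T hsum
  rw [map_sum] at hfin
  simp only [map_smul, smul_eq_mul] at hfin
  rw [Finset.sum_eq_single 0 (fun i _ hi => by
      rw [htr1 i (by omega), mul_zero])
    (fun h => absurd (Finset.mem_range.mpr (by omega)) h)] at hfin
  rw [pow_zero, map_zero] at hfin
  have hT1 : T 1 = (Module.finrank k K : k) := LinearMap.trace_one k K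
  rw [hT1] at hfin
  have : (Module.finrank k K : k) = 0 := (mul_eq_zero.mp hfin).resolve_left hc0
  have hrank : Module.finrank k K = 0 := Nat.cast_eq_zero.mp this
  have : Subsingleton K := Module.finrank_zero_iff.mp hrank
  exact hune (Subsingleton.elim u 0)

theorem stmt9 (k V : Type*) [Field k] [IsAlgClosed k] [CharZero k]
    [AddCommGroup V] [Module k V] [FiniteDimensional k V]
    (X1 X2 : Module.End k V) (h1 : X1 * X1 = 0)
    (h2 : X2 ^ 2 * X1 = X1 * X2 ^ 2 + X1 * X2 * X1)
    (hsimple : Nontrivial V ∧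
      ∀ W : Submodule k V, IsSubrep X1 X2 W → W = ⊥ ∨ W = ⊤) :
    Module.finrank k V = 1 ∧ X1 = 0 ∧ ∃! a : k, X2 = a • (1 : Module.End k V) := by
  obtain ⟨hnt, hsimp⟩ := hsimple
  haveI := hnt
  have hX1 : X1 = 0 := auxX1 X1 X2 h1 h2 hnt (fun W hW => hsimp W hW)
  obtain ⟨μ, hμ⟩ := Module.End.exists_eigenvalue X2
  obtain ⟨v, hv⟩ := hμ.exists_hasEigenvector
  have hvne : v ≠ 0 := hv.2
  have hX2v : X2 v = μ • v := hv.apply_eq_smul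
  set W : Submodule k V := Submodule.span k {v} with hWdef
  have hWsub : IsSubrep X1 X2 W := by
    constructor
    · rintro _ ⟨y, hy, rfl⟩
      rw [hX1]
      simpa using Submodule.zero_mem W
    · rw [Submodule.map_span_le]
      intro m hm
      rw [Set.mem_singleton_iff] at hm
      rw [hm, hX2v]
      exact Submodule.smul_mem _ _ (Submodule.mem_span_singleton_self v)
  have htop : W = ⊤ := by
    rcases hsimp W hWsub with hbot | htop
    · exact absurd (by rwa [hWdef, Submodule.span_singleton_eq_bot] at hbot) hvne
    · exact htop
  have hrank : Module.finrank k V = 1 := by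
    rw [← finrank_top k V, ← htop, hWdef]
    exact finrank_span_singleton hvne
  have hX2 : X2 = μ • (1 : Module.End k V) := by
    ext w
    have hwW : w ∈ W := htop ▸ Submodule.mem_top
    obtain ⟨c, rfl⟩ := Submodule.mem_span_singleton.mp hwW
    rw [map_smul, hX2v]
    simp [smul_smul, mul_comm]
  refine ⟨hrank, hX1, μ, hX2, fun b hb => ?_⟩
  have hbv := DFunLike.congr_fun (hb.symm.trans hX2) v
  simp only [LinearMap.smul_apply, Module.End.one_apply] at hbv
  have : (b - μ) • v = 0 := by rw [sub_smul, hbv, sub_self]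
  rcases smul_eq_zero.mp this with h | h
  · exact sub_eq_zero.mp h
  · exact absurd h hvne
end

section
/- In the super Jordan plane B, with s := x21 and t := x2², fix λ ∈ k and set z := t − λ·1. Then for every natural number n ≥ 1 one has zⁿ·x1 = x1 · Σ_{j=0}^{n} (n!/(n−j)!)·sʲ·zⁿ⁻ʲ, where the integers n!/(n−j)! are regarded as elements of k. -/
lemma ndf_rec (n j : ℕ) :
    (n+1).descFactorial j = n.descFactorial j + j * n.descFactorial (j-1) := by
  cases j with
  | zero => simp
  | succ m =>
    rw [Nat.succ_descFactorial_succ, Nat.descFactorial_succ, Nat.succ_sub_one]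
    rcases le_or_gt m n with h | h
    · rw [← add_mul]
      congr 1
      omega
    · have h1 : n.descFactorial m = 0 := Nat.descFactorial_eq_zero_iff_lt.mpr h
      have h2 : n.descFactorial (m+1) = 0 := Nat.descFactorial_eq_zero_iff_lt.mpr (by omega)
      simp [h1, h2]

lemma general_key {R : Type*} [Ring R] (a b c : R) (haa : a * a = 0)
    (hrel : b * (a*b + b*a) - (a*b + b*a) * b - a * (a*b + b*a) = 0)
    (hc : ∀ r : R, c * r = r * c) (n : ℕ) :
    (b*b - c)^n * a
      = a * ∑ j ∈ Finset.range (n+1),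
          n.descFactorial j • ((a*b + b*a)^j * (b*b - c)^(n-j)) := by
  set s := a*b + b*a with hs
  set z := b*b - c with hz
  have F2 : (b*b) * a = a * (b*b) + a * s := by
    have h : (b*b)*a - (a*(b*b) + a*s) = b*s - s*b - a*s := by rw [hs]; noncomm_ring
    rw [hrel] at h
    exact sub_eq_zero.mp h
  have F3 : (b*b) * s = s * (b*b) + s * s := by
    have h : (b*b)*s - (s*(b*b) + s*s)
        = b*(b*s - s*b - a*s) + (b*s - s*b - a*s)*b - a*(b*s - s*b - a*s)
          - (a*a)*(a*b) - (a*a)*(b*a) := by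
      rw [hs]; noncomm_ring
    rw [hrel, haa] at h
    simp only [mul_zero, zero_mul, add_zero, sub_zero, zero_add, zero_sub, neg_zero] at h
    exact sub_eq_zero.mp h
  have F4 : z * a = a * z + a * s := by
    calc z * a = (b*b)*a - c*a := by rw [hz, sub_mul]
    _ = (a*(b*b) + a*s) - a*c := by rw [F2, hc]
    _ = a*z + a*s := by rw [hz, mul_sub]; abel
  have F5 : z * s = s * z + s * s := by
    calc z * s = (b*b)*s - c*s := by rw [hz, sub_mul]
    _ = (s*(b*b) + s*s) - s*c := by rw [F3, hc]
    _ = s*z + s*s := by rw [hz, mul_sub]; abel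
  have F6 : ∀ j : ℕ, z * s^j = s^j * z + j • (s^(j+1)) := by
    intro j
    induction j with
    | zero => simp
    | succ m ih =>
      calc z * s^(m+1) = (z * s^m) * s := by rw [pow_succ, mul_assoc]
      _ = (s^m * z + m • s^(m+1)) * s := by rw [ih]
      _ = s^m * (z * s) + m • (s^(m+1) * s) := by
          rw [add_mul, mul_assoc, smul_mul_assoc]
      _ = s^m * (s*z + s*s) + m • (s^(m+2)) := by rw [F5, ← pow_succ]
      _ = s^(m+1) * z + s^(m+1) * s + m • s^(m+2) := by
          rw [mul_add, ← mul_assoc, ← mul_assoc, ← pow_succ]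
      _ = s^(m+1) * z + (m+1) • s^(m+2) := by
          rw [← pow_succ, succ_nsmul]; abel
  induction n with
  | zero => simp
  | succ n ih =>
    have hzn : z^(n+1) * a
        = a * ((z + s) * ∑ j ∈ Finset.range (n+1),
            n.descFactorial j • (s^j * z^(n-j))) := by
      calc z^(n+1) * a = z * (z^n * a) := by rw [pow_succ', mul_assoc]
      _ = (z * a) * ∑ j ∈ Finset.range (n+1),
            n.descFactorial j • (s^j * z^(n-j)) := by rw [ih, ← mul_assoc]
      _ = (a * z + a * s) * ∑ j ∈ Finset.range (n+1),
            n.descFactorial j • (s^j * z^(n-j)) := by rw [F4]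
      _ = a * ((z + s) * ∑ j ∈ Finset.range (n+1),
            n.descFactorial j • (s^j * z^(n-j))) := by
          rw [add_mul, add_mul, mul_assoc, mul_assoc, ← mul_add]
    rw [hzn]
    congr 1
    have expand : ∀ j ∈ Finset.range (n+1),
        (z + s) * (n.descFactorial j • (s^j * z^(n-j)))
          = n.descFactorial j • (s^j * z^(n+1-j))
            + ((j+1) * n.descFactorial j) • (s^(j+1) * z^(n-j)) := by
      intro j hj
      have hjn : j ≤ n := Nat.lt_succ_iff.mp (Finset.mem_range.mp hj)
      have h1 : z * (s^j * z^(n-j)) = s^j * z^(n+1-j) + j • (s^(j+1) * z^(n-j)) := by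
        have hnj : n - j + 1 = n + 1 - j := by omega
        calc z * (s^j * z^(n-j)) = (z * s^j) * z^(n-j) := by rw [mul_assoc]
        _ = (s^j * z + j • s^(j+1)) * z^(n-j) := by rw [F6]
        _ = s^j * (z * z^(n-j)) + j • (s^(j+1) * z^(n-j)) := by
            rw [add_mul, mul_assoc, smul_mul_assoc]
        _ = s^j * z^(n+1-j) + j • (s^(j+1) * z^(n-j)) := by
            rw [← pow_succ', hnj]
      have h2 : s * (s^j * z^(n-j)) = s^(j+1) * z^(n-j) := by
        rw [← mul_assoc, ← pow_succ']
      rw [add_mul, mul_smul_comm, mul_smul_comm, h1, h2, smul_add, smul_smul]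
      rw [add_assoc, ← add_smul]
      congr 2
      ring
    calc (z + s) * ∑ j ∈ Finset.range (n+1), n.descFactorial j • (s^j * z^(n-j))
        = ∑ j ∈ Finset.range (n+1),
            (z + s) * (n.descFactorial j • (s^j * z^(n-j))) := Finset.mul_sum _ _ _
      _ = ∑ j ∈ Finset.range (n+1),
            (n.descFactorial j • (s^j * z^(n+1-j))
              + ((j+1) * n.descFactorial j) • (s^(j+1) * z^(n-j))) :=
          Finset.sum_congr rfl expand
      _ = (∑ j ∈ Finset.range (n+1), n.descFactorial j • (s^j * z^(n+1-j)))
            + ∑ j ∈ Finset.range (n+1),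
                ((j+1) * n.descFactorial j) • (s^(j+1) * z^(n-j)) :=
          Finset.sum_add_distrib
      _ = ∑ j ∈ Finset.range (n+1+1), (n+1).descFactorial j • (s^j * z^(n+1-j)) := by
          have rhs_split : ∑ j ∈ Finset.range (n+2),
              (n+1).descFactorial j • (s^j * z^(n+1-j))
              = (∑ j ∈ Finset.range (n+2), n.descFactorial j • (s^j * z^(n+1-j)))
                + ∑ j ∈ Finset.range (n+2),
                    (j * n.descFactorial (j-1)) • (s^j * z^(n+1-j)) := by
            rw [← Finset.sum_add_distrib]
            refine Finset.sum_congr rfl fun j _ => ?_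
            rw [ndf_rec, add_smul]
          have A_eq : ∑ j ∈ Finset.range (n+2), n.descFactorial j • (s^j * z^(n+1-j))
              = ∑ j ∈ Finset.range (n+1), n.descFactorial j • (s^j * z^(n+1-j)) := by
            rw [Finset.sum_range_succ,
              Nat.descFactorial_eq_zero_iff_lt.mpr (Nat.lt_succ_self n), zero_smul,
              add_zero]
          have B_eq : ∑ j ∈ Finset.range (n+2),
              (j * n.descFactorial (j-1)) • (s^j * z^(n+1-j))
              = ∑ j ∈ Finset.range (n+1),
                  ((j+1) * n.descFactorial j) • (s^(j+1) * z^(n-j)) := by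
            rw [Finset.sum_range_succ']
            simp
          rw [rhs_split, A_eq, B_eq]

theorem stmt11 (k : Type*) [Field k] [CharZero k] (lam : k) (n : ℕ) (hn : 1 ≤ n) :
    (x2 k ^ 2 - algebraMap k (SuperJordanPlane k) lam) ^ n * x1 k
      = x1 k * ∑ j ∈ Finset.range (n + 1),
          ((n.factorial / (n - j).factorial : ℕ) : k) •
            (x21 k ^ j * (x2 k ^ 2 - algebraMap k (SuperJordanPlane k) lam) ^ (n - j)) := by
  have haa : x1 k * x1 k = 0 := by
    have h := RingQuot.mkAlgHom_rel k (SuperJordanRel.quad (k := k))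
    simpa [x1, map_mul] using h
  have hrel : x2 k * (x1 k * x2 k + x2 k * x1 k)
      - (x1 k * x2 k + x2 k * x1 k) * x2 k
      - x1 k * (x1 k * x2 k + x2 k * x1 k) = 0 := by
    have h := RingQuot.mkAlgHom_rel k (SuperJordanRel.cubic (k := k))
    simpa [x1, x2, map_mul, map_add, map_sub] using h
  have hc : ∀ r : SuperJordanPlane k, algebraMap k (SuperJordanPlane k) lam * r
      = r * algebraMap k (SuperJordanPlane k) lam := fun r => (Algebra.commutes lam r).symm ▸ rfl
  have key := general_key (x1 k) (x2 k) (algebraMap k (SuperJordanPlane k) lam) haa hrel hc n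
  have hsq : x2 k ^ 2 = x2 k * x2 k := sq (x2 k)
  rw [hsq]
  rw [key]
  congr 1
  refine Finset.sum_congr rfl fun j hj => ?_
  have hjn : j ≤ n := Nat.lt_succ_iff.mp (Finset.mem_range.mp hj)
  rw [← Nat.descFactorial_eq_div hjn, Nat.cast_smul_eq_nsmul]
  rfl
end

section
/- Let (X1, X2) be a representation of the super Jordan plane on a finite-dimensional k-vector space V, let T := X2², and let λ ∈ k. Then the generalized eigenspace ⋃_{j ≥ 0} ker((T − λ·id)ʲ) of T associated to λ is a submodule of V, i.e., it is invariant under both X1 and X2. -/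
open Polynomial

lemma nil_aux {k V : Type*} [Field k] [CharZero k] [AddCommGroup V] [Module k V]
    [FiniteDimensional k V] (t u : Module.End k V)
    (h : t * u = u * t + u * u) : IsNilpotent u := by
  obtain ⟨m, hm⟩ := Filter.eventually_atTop.mp u.eventually_iInf_range_pow_eq
  set W := LinearMap.range (u ^ m) with hWdef
  have hWstep : LinearMap.range (u ^ (m + 1)) = W :=
    (hm (m + 1) (Nat.le_succ m)).symm.trans (hm m le_rfl)
  -- power commutation identity
  have hpow : ∀ i : ℕ, t * u ^ i = u ^ i * t + i • (u ^ (i + 1)) := by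
    intro i
    induction i with
    | zero => simp
    | succ i ih =>
      calc t * u ^ (i + 1) = t * u ^ i * u := by rw [mul_assoc, ← pow_succ]
        _ = (u ^ i * t + i • u ^ (i + 1)) * u := by rw [ih]
        _ = u ^ i * (t * u) + i • (u ^ (i + 1) * u) := by
            rw [add_mul, smul_mul_assoc, mul_assoc]
        _ = u ^ i * (u * t) + u ^ i * (u * u) + i • (u ^ (i + 2)) := by
            rw [h, mul_add, ← pow_succ]
        _ = u ^ (i + 1) * t + (i + 1) • u ^ (i + 2) := by
            simp only [← mul_assoc, ← pow_succ, succ_nsmul]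
            abel
  have hu_mem : ∀ x ∈ W, u x ∈ W := by
    rintro x ⟨y, rfl⟩
    rw [← hWstep]
    exact ⟨y, by rw [pow_succ', Module.End.mul_apply]⟩
  have ht_mem : ∀ x ∈ W, t x ∈ W := by
    rintro x ⟨y, rfl⟩
    have e : t ((u ^ m) y) = (u ^ m) (t y) + m • ((u ^ (m + 1)) y) := by
      have := congrFun (congrArg (fun (f : Module.End k V) => (f : V → V)) (hpow m)) y
      simpa [Module.End.mul_apply] using this
    rw [e]
    refine Submodule.add_mem _ ⟨t y, rfl⟩ (nsmul_mem ?_ m)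
    rw [← hWstep]
    exact ⟨y, rfl⟩
  set tW := t.restrict ht_mem with htW
  set eW := u.restrict hu_mem with heW
  have hsurj : Function.Surjective eW := by
    rintro ⟨x, hx⟩
    have hx' : x ∈ LinearMap.range (u ^ (m + 1)) := hWstep.symm ▸ hx
    obtain ⟨z, hz⟩ := hx'
    refine ⟨⟨(u ^ m) z, ⟨z, rfl⟩⟩, ?_⟩
    apply Subtype.ext
    simp only [heW, LinearMap.restrict_apply]
    rw [← Module.End.mul_apply, ← pow_succ', hz]
  have hbij : Function.Bijective eW :=
    ⟨LinearMap.injective_iff_surjective.mpr hsurj, hsurj⟩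
  have hrel : tW * eW = eW * tW + eW * eW := by
    ext x
    have hx := congrFun (congrArg (fun (f : Module.End k V) => (f : V → V)) h) (x : V)
    simp only [Module.End.mul_apply, LinearMap.add_apply] at hx
    simp only [htW, heW, Module.End.mul_apply, LinearMap.add_apply, LinearMap.restrict_apply,
      Submodule.coe_add]
    exact hx
  obtain ⟨eu, heu⟩ := (Module.End.isUnit_iff eW).mpr hbij
  have hinv1 : (↑eu⁻¹ : Module.End k W) * eW = 1 := by rw [← heu]; exact eu.inv_mul
  have hconj : ∀ c : k, (↑eu⁻¹ : Module.End k W) * (tW + c • eW) * eW = tW + eW + c • eW := by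
    intro c
    have e1 : (↑eu⁻¹ : Module.End k W) * tW * eW = tW + eW := by
      rw [mul_assoc, hrel, mul_add, ← mul_assoc, ← mul_assoc, hinv1, one_mul, one_mul]
    have e2 : (↑eu⁻¹ : Module.End k W) * (c • eW) * eW = c • eW := by
      rw [mul_smul_comm, smul_mul_assoc, hinv1, one_mul]
    rw [mul_add, add_mul, e1, e2]
  have hdet : ∀ j : ℕ, LinearMap.det (tW + (j : k) • eW) = LinearMap.det tW := by
    intro j
    induction j with
    | zero => simp
    | succ j ih =>
      have e : tW + ((j + 1 : ℕ) : k) • eW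
          = (↑eu⁻¹ : Module.End k W) * (tW + (j : k) • eW) * eW := by
        rw [hconj]
        push_cast
        rw [add_smul, one_smul]
        abel
      have hone : LinearMap.det (↑eu⁻¹ : Module.End k W) * LinearMap.det eW = 1 := by
        rw [← map_mul, hinv1, map_one]
      calc LinearMap.det (tW + ((j + 1 : ℕ) : k) • eW)
          = LinearMap.det (↑eu⁻¹ : Module.End k W) * LinearMap.det (tW + (j : k) • eW) *
            LinearMap.det eW := by rw [e, map_mul, map_mul]
        _ = (LinearMap.det (↑eu⁻¹ : Module.End k W) * LinearMap.det eW) *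
            LinearMap.det (tW + (j : k) • eW) := by ring
        _ = LinearMap.det (tW + (j : k) • eW) := by rw [hone, one_mul]
        _ = LinearMap.det tW := ih
  -- now the polynomial argument
  set d := Module.finrank k W with hd
  by_cases hd0 : d = 0
  · have hWbot : W = ⊥ := Submodule.finrank_eq_zero.mp hd0
    exact ⟨m, LinearMap.range_eq_bot.mp (hWdef ▸ hWbot)⟩
  · exfalso
    have b := Module.finBasis k W
    set A := LinearMap.toMatrix b b tW with hA
    set B := LinearMap.toMatrix b b eW with hB
    have hBdet : IsUnit B.det := by
      rw [hB, LinearMap.det_toMatrix]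
      have := eu.isUnit.map LinearMap.det
      rwa [heu] at this
    set D := B⁻¹ * A with hD
    set P := Matrix.det (A.map (C : k → k[X]) + (X : k[X]) • B.map (C : k → k[X])) with hP
    have hfact : P = C B.det * (-D).charpoly := by
      rw [hP, Matrix.charpoly]
      have e1 : Matrix.charmatrix (-D) = (X : k[X]) • 1 + D.map (C : k → k[X]) := by
        ext i j
        by_cases hij : i = j
        · subst hij
          simp [Matrix.charmatrix_apply_eq, Matrix.smul_apply, Matrix.one_apply_eq,
            Matrix.add_apply, Matrix.map_apply, smul_eq_mul, mul_one, sub_eq_add_neg]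
        · simp [Matrix.charmatrix_apply_ne _ _ _ hij, Matrix.one_apply_ne hij,
            Matrix.add_apply, Matrix.smul_apply, Matrix.map_apply]
      have e2 : A.map (C : k → k[X]) + (X : k[X]) • B.map (C : k → k[X])
          = B.map (C : k → k[X]) * Matrix.charmatrix (-D) := by
        rw [e1, mul_add]
        have e3 : B.map (C : k → k[X]) * D.map (C : k → k[X]) = A.map (C : k → k[X]) := by
          rw [← Matrix.map_mul, hD, Matrix.mul_nonsing_inv_cancel_left _ _ hBdet]
        have e4 : B.map (C : k → k[X]) * ((X : k[X]) • 1) = (X : k[X]) • B.map (C : k → k[X]) := by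
          rw [mul_smul_comm, mul_one]
        rw [e3, e4, add_comm]
      rw [e2, Matrix.det_mul]
      congr 1
      rw [← RingHom.mapMatrix_apply, ← RingHom.map_det]
    have hcoeff : P.coeff d = B.det := by
      rw [hfact, coeff_C_mul]
      have e : (-D).charpoly.natDegree = d := by
        rw [Matrix.charpoly_natDegree_eq_dim, Fintype.card_fin]
      rw [← e, (Matrix.charpoly_monic (-D)).coeff_natDegree, mul_one]
    have heval : ∀ c : k, P.eval c = LinearMap.det (tW + c • eW) := by
      intro c
      have e5 : P.eval c = ((A.map (C : k → k[X]) + (X : k[X]) • B.map (C : k → k[X])).map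
          (eval c)).det := by
        rw [hP]
        have := RingHom.map_det (evalRingHom c)
          (A.map (C : k → k[X]) + (X : k[X]) • B.map (C : k → k[X]))
        rw [RingHom.mapMatrix_apply] at this
        simpa using this
      have e6 : ((A.map (C : k → k[X]) + (X : k[X]) • B.map (C : k → k[X])).map (eval c))
          = A + c • B := by
        ext i j
        simp only [Matrix.map_apply, Matrix.add_apply, Matrix.smul_apply, smul_eq_mul,
          eval_add, eval_mul, eval_X, eval_C]
      rw [e5, e6]
      have e7 : A + c • B = LinearMap.toMatrix b b (tW + c • eW) := by
        rw [hA, hB, map_add, map_smul]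
      rw [e7, LinearMap.det_toMatrix]
    have hconst : ∀ j : ℕ, P.eval ((j : ℕ) : k) = LinearMap.det tW := by
      intro j; rw [heval, hdet]
    have hPzero : P - C (LinearMap.det tW) = 0 := by
      apply Polynomial.eq_zero_of_infinite_isRoot
      refine (Set.infinite_range_of_injective (Nat.cast_injective (R := k))).mono ?_
      rintro x ⟨j, rfl⟩
      show (P - C (LinearMap.det tW)).eval ((j : ℕ) : k) = 0
      rw [eval_sub, eval_C, hconst j, sub_self]
    have hPc : P = C (LinearMap.det tW) := sub_eq_zero.mp hPzero
    have : B.det = 0 := by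
      rw [← hcoeff, hPc, coeff_C, if_neg hd0]
    exact hBdet.ne_zero this



theorem stmt12 (k V : Type*) [Field k] [CharZero k] [AddCommGroup V] [Module k V]
    [FiniteDimensional k V]
    (X1 X2 : Module.End k V) (h1 : X1 * X1 = 0)
    (h2 : X2 ^ 2 * X1 = X1 * X2 ^ 2 + X1 * X2 * X1) (lam : k) :
    IsSubrep X1 X2
      (⨆ j : ℕ, LinearMap.ker ((X2 ^ 2 - lam • (1 : Module.End k V)) ^ j)) := by
  unfold IsSubrep
  have hTu : X2 ^ 2 * (X1 * X2) = (X1 * X2) * X2 ^ 2 + (X1 * X2) * (X1 * X2) := by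
    have h2' := congrArg (fun z => z * X2) h2
    linear_combination (norm := noncomm_ring) h2'
  set N := X2 ^ 2 - lam • (1 : Module.End k V) with hN
  set G := ⨆ j : ℕ, LinearMap.ker (N ^ j) with hG
  have hmono : Monotone fun j : ℕ => LinearMap.ker (N ^ j) := by
    intro i j hij x hx
    simp only [LinearMap.mem_ker] at hx ⊢
    have e : N ^ j = N ^ (j - i) * N ^ i := by rw [← pow_add]; congr 1; omega
    rw [e, Module.End.mul_apply, hx, map_zero]
  have hmem : ∀ x : V, x ∈ G ↔ ∃ j : ℕ, (N ^ j) x = 0 := by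
    intro x
    rw [hG, Submodule.mem_iSup_of_directed _ hmono.directed_le]
    simp only [LinearMap.mem_ker]
  have hNmem : ∀ x : V, N x ∈ G → x ∈ G := by
    intro x hx
    rw [hmem] at hx ⊢
    obtain ⟨j, hj⟩ := hx
    exact ⟨j + 1, by rw [pow_succ, Module.End.mul_apply]; exact hj⟩
  -- X2 invariance
  have hX2 : ∀ x ∈ G, X2 x ∈ G := by
    intro x hx
    rw [hmem] at hx ⊢
    obtain ⟨j, hj⟩ := hx
    refine ⟨j, ?_⟩
    have hc : Commute X2 N := by
      simp only [hN]
      apply Commute.sub_right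
      · exact (Commute.pow_self X2 2).symm
      · exact Commute.smul_right (Commute.one_right X2) lam
    have hcj := ((hc.pow_right j).symm.eq)
    rw [← Module.End.mul_apply, hcj, Module.End.mul_apply, hj, map_zero]
  -- u := X1 * X2 and its properties
  set u := X1 * X2 with hu
  obtain ⟨d0, hd0⟩ := nil_aux (X2 ^ 2) u hTu
  have hNu : N * u = u * N + u * u := by
    have e : N * u - u * N = X2 ^ 2 * u - u * (X2 ^ 2) := by
      simp only [hN, sub_mul, mul_sub, smul_mul_assoc, mul_smul_comm, one_mul, mul_one]
      abel
    have h' : N * u - u * N = u * u := by rw [e, hTu]; abel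
    linear_combination (norm := noncomm_ring) h'
  have hNX1 : N * X1 = X1 * N + u * X1 := by
    have e : N * X1 - X1 * N = X2 ^ 2 * X1 - X1 * (X2 ^ 2) := by
      simp only [hN, sub_mul, mul_sub, smul_mul_assoc, mul_smul_comm, one_mul, mul_one]
      abel
    have h' : N * X1 - X1 * N = u * X1 := by
      rw [e, h2, hu, mul_assoc]
      abel
    linear_combination (norm := noncomm_ring) h'
  have hNA : ∀ i : ℕ, N * (u ^ i * X1)
      = (u ^ i * X1) * N + (i + 1) • (u ^ (i + 1) * X1) := by
    intro i
    induction i with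
    | zero => simpa using hNX1
    | succ i ih =>
      calc N * (u ^ (i + 1) * X1) = (N * u) * (u ^ i * X1) := by
            rw [pow_succ', mul_assoc, ← mul_assoc]
        _ = u * (N * (u ^ i * X1)) + (u * u) * (u ^ i * X1) := by
            rw [hNu, add_mul, mul_assoc, mul_assoc]
        _ = u * ((u ^ i * X1) * N) + (i + 1) • (u * (u ^ (i + 1) * X1))
            + (u * u) * (u ^ i * X1) := by rw [ih, mul_add, mul_smul_comm]
        _ = (u ^ (i + 1) * X1) * N + (i + 1 + 1) • (u ^ (i + 1 + 1) * X1) := by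
            have e2 : u * u * u ^ i = u ^ (i + 1 + 1) := by
              rw [mul_assoc, ← pow_succ', ← pow_succ']
            simp only [← mul_assoc, ← pow_succ', succ_nsmul, e2]
            abel
  -- main double induction
  have main : ∀ t : ℕ, ∀ i : ℕ, d0 ≤ i + t → ∀ x ∈ G, (u ^ i * X1) x ∈ G := by
    intro t
    induction t with
    | zero =>
      intro i hi x _
      have e : u ^ i = 0 := pow_eq_zero_of_le (by omega) hd0
      simp only [e, zero_mul, LinearMap.zero_apply]
      exact Submodule.zero_mem G
    | succ t ih =>
      intro i hi x hx
      rcases le_or_gt d0 (i + t) with hle | hlt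
      · exact ih i hle x hx
      · obtain ⟨j, hj⟩ := (hmem x).mp hx
        clear hx
        induction j generalizing x with
        | zero =>
          have e : x = 0 := by simpa using hj
          rw [e, map_zero]
          exact Submodule.zero_mem G
        | succ j ihj =>
          apply hNmem
          have expand := congrFun (congrArg (fun (f : Module.End k V) => (f : V → V)) (hNA i)) x
          simp only [Module.End.mul_apply, LinearMap.add_apply, LinearMap.smul_apply] at expand
          simp only [Module.End.mul_apply]
          rw [expand]
          refine Submodule.add_mem _ ?_ (nsmul_mem ?_ (i + 1))
          · have := ihj (N x) (by rw [← Module.End.mul_apply, ← pow_succ]; exact hj)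
            simpa only [Module.End.mul_apply] using this
          · have := ih (i + 1) (by omega) x ((hmem x).mpr ⟨j + 1, hj⟩)
            simpa only [Module.End.mul_apply] using this
  have hX1 : ∀ x ∈ G, X1 x ∈ G := by
    intro x hx
    have := main d0 0 (by omega) x hx
    simpa using this
  constructor
  · rintro y ⟨x, hx, rfl⟩
    exact hX1 x hx
  · rintro y ⟨x, hx, rfl⟩
    exact hX2 x hx
end

section
/- Let k be algebraically closed of characteristic 0 and let (X1, X2) be a representation of the super Jordan plane on a finite-dimensional k-vector space V; set T := X2². Then V is the internal direct sum, over the distinct eigenvalues λ of T, of the generalized eigenspaces of T, and each of these is a submodule. In particular, if the representation is indecomposable then T has a unique eigenvalue λ, and every eigenvalue μ of X2 satisfies μ² = λ (so X2 has either a unique eigenvalue or exactly the two eigenvalues μ and −μ for some μ ≠ 0). -/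
open Module Module.End LinearMap LieAlgebra Set

attribute [local instance] LieRing.ofAssociativeRing

section Eigenspaces

variable {k V : Type*} [Field k] [AddCommGroup V] [Module k V]

lemma iSup_ker_pow_sub_smul_eq_maxGenEigenspace (f : End k V) (μ : k) :
    ⨆ j : ℕ, ker ((f - μ • (1 : End k V)) ^ j) = f.maxGenEigenspace μ := by
  rw [← iSup_genEigenspace_eq]
  exact iSup_congr fun j => genEigenspace_nat.symm

lemma mapsTo_maxGenEigenspace_of_ad_pow_eq_zero {f g : End k V} {n : ℕ}
    (h : (ad k (End k V) f ^ n) g = 0) (μ : k) :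
    MapsTo g (f.maxGenEigenspace μ) (f.maxGenEigenspace μ) := by
  intro v hv
  have hg : g ∈ (ad k (End k V) f).maxGenEigenspace 0 :=
    (mem_maxGenEigenspace _ _ _).mpr ⟨n, by simpa using h⟩
  simpa [LieModule.toEnd_module_end] using LieModule.lie_mem_maxGenEigenspace_toEnd (M := V) hg
    (by simpa [LieModule.toEnd_module_end] using hv)

lemma ad_pow_apply_eq_factorial_smul {T y x : End k V} (hTy : T * y - y * T = y * y)
    (hTx : T * x - x * T = y * x) (n : ℕ) :
    (ad k (End k V) T ^ n) x = (n.factorial : k) • (y ^ n * x) := by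
  have hpow (m : ℕ) : T * y ^ m - y ^ m * T = (m : k) • y ^ (m + 1) := by
    induction m with
    | zero => simp
    | succ m ih =>
      calc T * y ^ (m + 1) - y ^ (m + 1) * T
          = (T * y ^ m - y ^ m * T) * y + y ^ m * (T * y - y * T) := by noncomm_ring
        _ = ((m + 1 : ℕ) : k) • y ^ (m + 2) := by
          rw [ih, hTy, smul_mul_assoc, ← pow_succ, ← mul_assoc, ← pow_succ, ← pow_succ]
          push_cast
          module
  induction n with
  | zero => simp
  | succ n ih =>
    rw [pow_succ', Module.End.mul_apply, ih, map_smul, ad_apply, Ring.lie_def]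
    calc (n.factorial : k) • (T * (y ^ n * x) - y ^ n * x * T)
        = (n.factorial : k) • ((T * y ^ n - y ^ n * T) * x + y ^ n * (T * x - x * T)) := by
          congr 1; noncomm_ring
      _ = ((n + 1).factorial : k) • (y ^ (n + 1) * x) := by
          rw [hpow, hTx, smul_mul_assoc, ← mul_assoc, ← pow_succ, Nat.factorial_succ]
          push_cast
          module

lemma eq_zero_of_hasEigenvalue_of_commutator_eq_sq [CharZero k] [FiniteDimensional k V]
    {T y : End k V} (h : T * y - y * T = y * y) {μ : k} (hμ : y.HasEigenvalue μ) : μ = 0 := by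
  set E := y.maxGenEigenspace μ
  have hT : MapsTo T E E := mapsTo_maxGenEigenspace_of_ad_pow_eq_zero (n := 2) (by
    have had : y * T - T * y = -(y * y) := by rw [← h]; abel
    rw [pow_two, Module.End.mul_apply, ad_apply, ad_apply, Ring.lie_def, Ring.lie_def, had]
    noncomm_ring) μ
  have hy : MapsTo y E E := mapsTo_maxGenEigenspace_of_comm rfl μ
  have hnil : IsNilpotent (y.restrict hy - algebraMap k (End k E) μ) := by
    convert isNilpotent_restrict_maxGenEigenspace_sub_algebraMap y μ
    ext; rfl
  have hsq : y.restrict hy * y.restrict hy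
      = T.restrict hT * y.restrict hy - y.restrict hy * T.restrict hT := by
    ext v; exact congr($h.symm ↑v)
  have htr_y : trace k E (y.restrict hy) = μ * finrank k E := by
    simpa [Module.End.one_eq_id] using
      trace_comp_eq_mul_of_commute_of_isNilpotent μ (Commute.one_left _) hnil
  have htr_sq : trace k E (y.restrict hy * y.restrict hy) = μ * (μ * finrank k E) := by
    rw [Module.End.mul_eq_comp,
      trace_comp_eq_mul_of_commute_of_isNilpotent μ (Commute.refl _) hnil, htr_y]
  have : Nontrivial E := Submodule.nontrivial_iff_ne_bot.mpr (hμ.le le_top)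
  rw [hsq, map_sub, trace_mul_comm, sub_self, eq_comm] at htr_sq
  simpa [finrank_pos.ne'] using htr_sq

lemma isNilpotent_of_forall_hasEigenvalue_eq_zero [IsAlgClosed k] [FiniteDimensional k V]
    {f : End k V} (h : ∀ μ, f.HasEigenvalue μ → μ = 0) : IsNilpotent f := by
  have htop : f.maxGenEigenspace 0 = ⊤ := by
    rw [eq_top_iff, ← iSup_maxGenEigenspace_eq_top f, iSup_le_iff]
    intro μ
    by_cases hμ : f.maxGenEigenspace μ = ⊥
    · simp [hμ]
    · obtain rfl := h μ ((hasUnifEigenvalue_iff_hasUnifEigenvalue_one (by simp)).mp hμ)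
      exact le_rfl
  refine ((charpoly_nilpotent_tfae f).out 0 2).mpr fun v => ?_
  obtain ⟨n, hn⟩ := (mem_maxGenEigenspace _ _ _).mp (htop ▸ Submodule.mem_top : v ∈ _)
  exact ⟨n, by simpa using hn⟩

lemma isNilpotent_of_commutator_eq_sq [IsAlgClosed k] [CharZero k] [FiniteDimensional k V]
    {T y : End k V} (h : T * y - y * T = y * y) : IsNilpotent y :=
  isNilpotent_of_forall_hasEigenvalue_eq_zero fun _ => eq_zero_of_hasEigenvalue_of_commutator_eq_sq h

end Eigenspaces

section Representations

variable {k V : Type*} [Field k] [AddCommGroup V] [Module k V] {X1 X2 : End k V}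

lemma isSubrep_iff_mapsTo {W : Submodule k V} :
    IsSubrep X1 X2 W ↔ MapsTo X1 W W ∧ MapsTo X2 W W := by
  simp only [IsSubrep, Submodule.map_le_iff_le_comap]
  rfl

lemma IsIndecomposable.eq_of_ne_bot {ι : Type*} {W : ι → Submodule k V}
    (hind : IsIndecomposable X1 X2) (hsub : ∀ i, IsSubrep X1 X2 (W i))
    (hindep : iSupIndep W) (htop : ⨆ i, W i = ⊤) {i j : ι} (hi : W i ≠ ⊥) (hj : W j ≠ ⊥) :
    i = j := by
  by_contra hij
  refine hind.2 ⟨W i, ⨆ l ∈ {l | l ≠ i}, W l, hsub i, ?_, hi, ?_, hindep i, ?_⟩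
  · rw [isSubrep_iff_mapsTo]
    exact ⟨mapsTo_biSup_of_mapsTo _ fun l => (isSubrep_iff_mapsTo.mp (hsub l)).1,
      mapsTo_biSup_of_mapsTo _ fun l => (isSubrep_iff_mapsTo.mp (hsub l)).2⟩
  · exact ne_bot_of_le_ne_bot hj (le_iSup₂_of_le j (Ne.symm hij) le_rfl)
  · rw [codisjoint_iff, ← htop, iSup_split_single W i]
    rfl

end Representations

section SuperJordan

variable {k V : Type*} [Field k] [AddCommGroup V] [Module k V] {X1 X2 : End k V}

lemma superJordan_commutator_sq_X1 (h1 : X1 * X1 = 0)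
    (h2 : X2 ^ 2 * X1 = X1 * X2 ^ 2 + X1 * X2 * X1) :
    X2 ^ 2 * X1 - X1 * X2 ^ 2 = (X1 * X2 + X2 * X1) * X1 := by
  linear_combination (norm := noncomm_ring) h2 - X2 * h1

lemma superJordan_commutator_sq_anticommutator (h1 : X1 * X1 = 0)
    (h2 : X2 ^ 2 * X1 = X1 * X2 ^ 2 + X1 * X2 * X1) :
    X2 ^ 2 * (X1 * X2 + X2 * X1) - (X1 * X2 + X2 * X1) * X2 ^ 2
      = (X1 * X2 + X2 * X1) * (X1 * X2 + X2 * X1) := by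
  linear_combination (norm := noncomm_ring)
    h2 * X2 + X2 * h2 - X1 * h2 - X2 * h1 * X2 - h1 * X2 ^ 2 - h1 * X2 * X1

lemma superJordan_isSubrep_maxGenEigenspace [IsAlgClosed k] [CharZero k] [FiniteDimensional k V]
    (h1 : X1 * X1 = 0) (h2 : X2 ^ 2 * X1 = X1 * X2 ^ 2 + X1 * X2 * X1) (μ : k) :
    IsSubrep X1 X2 ((X2 ^ 2).maxGenEigenspace μ) := by
  have hTy := superJordan_commutator_sq_anticommutator h1 h2
  obtain ⟨N, hN⟩ := isNilpotent_of_commutator_eq_sq hTy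
  have hX1 : (ad k (End k V) (X2 ^ 2) ^ N) X1 = 0 := by
    rw [ad_pow_apply_eq_factorial_smul hTy (superJordan_commutator_sq_X1 h1 h2), hN,
      zero_mul, smul_zero]
  exact isSubrep_iff_mapsTo.mpr ⟨mapsTo_maxGenEigenspace_of_ad_pow_eq_zero hX1 μ,
    mapsTo_maxGenEigenspace_of_comm ((Commute.refl X2).pow_left 2) μ⟩

end SuperJordan

theorem stmt13 (k V : Type*) [Field k] [IsAlgClosed k] [CharZero k]
    [AddCommGroup V] [Module k V] [FiniteDimensional k V]
    (X1 X2 : Module.End k V) (h1 : X1 * X1 = 0)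
    (h2 : X2 ^ 2 * X1 = X1 * X2 ^ 2 + X1 * X2 * X1) :
    iSupIndep (fun lam : k =>
        ⨆ j : ℕ, LinearMap.ker ((X2 ^ 2 - lam • (1 : Module.End k V)) ^ j)) ∧
    (⨆ lam : k, ⨆ j : ℕ, LinearMap.ker ((X2 ^ 2 - lam • (1 : Module.End k V)) ^ j)) = ⊤ ∧
    (∀ lam : k, IsSubrep X1 X2
      (⨆ j : ℕ, LinearMap.ker ((X2 ^ 2 - lam • (1 : Module.End k V)) ^ j))) ∧
    (IsIndecomposable X1 X2 →
      ∃ lam : k, (∀ μ : k, (X2 ^ 2).HasEigenvalue μ ↔ μ = lam) ∧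
        ∀ μ : k, X2.HasEigenvalue μ → μ ^ 2 = lam) := by
  simp only [iSup_ker_pow_sub_smul_eq_maxGenEigenspace]
  have hsub := superJordan_isSubrep_maxGenEigenspace h1 h2
  refine ⟨independent_maxGenEigenspace _, iSup_maxGenEigenspace_eq_top _, hsub, fun hind => ?_⟩
  have : Nontrivial V := hind.1
  obtain ⟨lam, hlam⟩ := exists_eigenvalue (X2 ^ 2)
  have huniq (μ : k) (hμ : (X2 ^ 2).HasEigenvalue μ) : μ = lam :=
    hind.eq_of_ne_bot hsub (independent_maxGenEigenspace _) (iSup_maxGenEigenspace_eq_top _)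
      (hμ.le le_top) (hlam.le le_top)
  exact ⟨lam, fun μ => ⟨huniq μ, fun h => h ▸ hlam⟩, fun μ hμ => huniq _ (hμ.pow 2)⟩
end

section
/- Let (X1, X2) be a representation of the super Jordan plane on an n-dimensional k-vector space V and let {v1, …, vn} be a basis of V such that X1 v2 = v1 and X1 vi = 0 for all i ≠ 2 (i.e., the matrix of X1 in this basis is the matrix unit E12). Then there is no submodule L of V with V = span{v1} ⊕ L. -/
/-! Since `X1` kills `v₁`, it maps `V = span{v₁} ⊕ L` into the `X1`-invariant `L`; hence
`v₁ = X1 v₂ ∈ L`, contradicting `span{v₁} ∩ L = 0`. -/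

theorem LinearMap.range_le_of_sup_eq_top {R M : Type*} [Semiring R] [AddCommMonoid M]
    [Module R M] {X : Module.End R M} {W L : Submodule R M} (hW : W ≤ LinearMap.ker X)
    (hL : L.map X ≤ L) (h : W ⊔ L = ⊤) : LinearMap.range X ≤ L := by
  rw [LinearMap.range_eq_map, ← h, Submodule.map_sup, LinearMap.le_ker_iff_map.mp hW,
    bot_sup_eq]
  exact hL

theorem stmt14 (k V : Type*) [Field k] [AddCommGroup V] [Module k V]
    (n : ℕ) (hn : 2 ≤ n) (v : Module.Basis (Fin n) k V)
    (X1 X2 : Module.End k V)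
    (hv2 : X1 (v ⟨1, by omega⟩) = v ⟨0, by omega⟩)
    (hvi : ∀ i : Fin n, i ≠ ⟨1, by omega⟩ → X1 (v i) = 0) :
    ¬ ∃ L : Submodule k V, IsSubrep X1 X2 L ∧
        IsCompl (Submodule.span k {v ⟨0, by omega⟩}) L := by
  rintro ⟨L, ⟨hL, -⟩, hcompl⟩
  have hker : Submodule.span k {v ⟨0, by omega⟩} ≤ LinearMap.ker X1 := by
    rw [Submodule.span_singleton_le_iff_mem, LinearMap.mem_ker]
    exact hvi _ (by simp [Fin.ext_iff])
  have hv1L : v ⟨0, by omega⟩ ∈ L :=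
    LinearMap.range_le_of_sup_eq_top hker hL hcompl.sup_eq_top ⟨_, hv2⟩
  have hv1_eq_zero : v ⟨0, by omega⟩ = 0 :=
    (Submodule.disjoint_def.mp hcompl.disjoint) _ (Submodule.mem_span_singleton_self _) hv1L
  exact v.ne_zero _ hv1_eq_zero
end

section
/- Let (X1, X2) be a representation of the super Jordan plane on a 2-dimensional k-vector space V. If ker X1 ≠ V (equivalently X1 ≠ 0), then the representation is indecomposable. -/
theorem stmt15 (k V : Type*) [Field k] [CharZero k] [AddCommGroup V] [Module k V]
    [FiniteDimensional k V] (hdim : Module.finrank k V = 2)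
    (X1 X2 : Module.End k V) (h1 : X1 * X1 = 0)
    (h2 : X2 ^ 2 * X1 = X1 * X2 ^ 2 + X1 * X2 * X1)
    (h0 : LinearMap.ker X1 ≠ ⊤) :
    IsIndecomposable X1 X2 := by
  constructor
  · have : 0 < Module.finrank k V := by omega
    exact Module.nontrivial_of_finrank_pos this
  rintro ⟨W, L, ⟨hW1, _⟩, ⟨hL1, _⟩, hWne, hLne, hcompl⟩
  -- any 1-dimensional X1-invariant subspace is contained in ker X1
  have key : ∀ U : Submodule k V, Submodule.map X1 U ≤ U →
      Module.finrank k U = 1 → U ≤ LinearMap.ker X1 := by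
    intro U hinv hU1 w hw
    rcases eq_or_ne w 0 with rfl | hwne
    · simp
    have hw' : (⟨w, hw⟩ : U) ≠ 0 := by
      simp [Submodule.mk_eq_zero, hwne]
    have hXw : X1 w ∈ U := hinv ⟨w, hw, rfl⟩
    rcases (finrank_eq_one_iff_of_nonzero' (⟨w, hw⟩ : U) hw').mp hU1 ⟨X1 w, hXw⟩
      with ⟨c, hc⟩
    have hcV : X1 w = c • w := by
      have := congrArg (Subtype.val) hc
      simpa using this.symm
    have hsq : X1 (X1 w) = 0 := by
      have := congrFun (congrArg DFunLike.coe h1) w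
      simpa [Module.End.mul_apply] using this
    have : (c * c) • w = 0 := by
      rw [hcV, map_smul, hcV, smul_smul] at hsq
      exact hsq
    have hc0 : c = 0 := by
      rcases smul_eq_zero.mp this with h | h
      · rcases mul_eq_zero.mp h with h | h <;> exact h
      · exact absurd h hwne
    simp [LinearMap.mem_ker, hcV, hc0]
  have hsum : Module.finrank k W + Module.finrank k L = 2 := by
    rw [← hdim]; exact Submodule.finrank_add_eq_of_isCompl hcompl
  have hWpos : 0 < Module.finrank k W :=
    Nat.pos_of_ne_zero fun h => hWne (Submodule.finrank_eq_zero.mp h)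
  have hLpos : 0 < Module.finrank k L :=
    Nat.pos_of_ne_zero fun h => hLne (Submodule.finrank_eq_zero.mp h)
  have hkerW : W ≤ LinearMap.ker X1 := key W hW1 (by omega)
  have hkerL : L ≤ LinearMap.ker X1 := key L hL1 (by omega)
  apply h0
  rw [eq_top_iff, ← hcompl.sup_eq_top]
  exact sup_le hkerW hkerL
end

section
/- Let (X1, X2) be a representation of the super Jordan plane on a 2-dimensional k-vector space V with X1 ≠ 0. Then there exists a basis {v1, v2} of V with X1 v1 = 0 and X1 v2 = v1 such that either (i) X2 v1 = a·v1 and X2 v2 = b·v1 + a·v2 for some a, b ∈ k, or (ii) X2 v1 = a·v1 and X2 v2 = −a·v2 for some a ∈ k with a ≠ 0. Consequently every 2-dimensional indecomposable representation with X1 ≠ 0 is isomorphic to one of the representations U_{a,b} (matrix of X2 equal to [[a,b],[0,a]]) or V_a (matrix of X2 equal to [[a,0],[0,−a]], a ≠ 0) with X1 = E12. -/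
/-!
Since `X1² = 0 ≠ X1` and `dim V = 2`, any `w` with `X1 w ≠ 0` gives a basis `(X1 w, w)` in
which `X1 = E₁₂`. Writing `X2 = [[a, b], [c, d]]` in such a basis, the defining relation
evaluated at the second basis vector reads `a² = d² + c` and `c (a + d) = 0`, which forces
`c = 0` and `d = ±a`. If `d = -a ≠ 0`, replacing `w` by `w - b/(2a) • X1 w` kills `b`.
-/

open Module

section

variable {k V : Type*} [Field k] [AddCommGroup V] [Module k V]

theorem Module.Basis.equivFun_apply_eq_toLin' {ι : Type*} [Fintype ι] [DecidableEq ι]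
    (B : Basis ι k V) {X : Module.End k V} {M : Matrix ι ι k}
    (hX : ∀ j, X (B j) = ∑ i, M i j • B i) (u : V) :
    B.equivFun (X u) = Matrix.toLin' M (B.equivFun u) := by
  have hM : LinearMap.toMatrix B B X = M := by
    ext i j
    rw [LinearMap.toMatrix_apply, hX, B.repr_sum_self]
  rw [Basis.equivFun_apply, Basis.equivFun_apply, Matrix.toLin'_apply, ← hM,
    LinearMap.toMatrix_mulVec_repr]

theorem linearIndependent_pair_apply_self {f : Module.End k V} {w : V} (hw : f w ≠ 0)
    (hfw : f (f w) = 0) : LinearIndependent k ![f w, w] := by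
  rw [LinearIndependent.pair_iff]
  intro s t hst
  have ht : t = 0 := by
    simpa [hfw, hw] using congrArg f hst
  subst ht
  exact ⟨by simpa [hw] using hst, rfl⟩

theorem exists_basis_apply_self (hdim : finrank k V = 2) {f : Module.End k V} {w : V}
    (hw : f w ≠ 0) (hfw : f (f w) = 0) : ∃ B : Basis (Fin 2) k V, B 0 = f w ∧ B 1 = w :=
  ⟨basisOfLinearIndependentOfCardEqFinrank (linearIndependent_pair_apply_self hw hfw)
      (by simp [hdim]), by simp [coe_basisOfLinearIndependentOfCardEqFinrank]⟩

variable {X1 X2 : Module.End k V}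

theorem exists_upperTriangular_of_relation (B : Basis (Fin 2) k V)
    (hB0 : X1 (B 0) = 0) (hB1 : X1 (B 1) = B 0)
    (h2 : X2 ^ 2 * X1 = X1 * X2 ^ 2 + X1 * X2 * X1) :
    ∃ a b d : k, d ^ 2 = a ^ 2 ∧ X2 (B 0) = a • B 0 ∧ X2 (B 1) = b • B 0 + d • B 1 := by
  have hX2 (i : Fin 2) : X2 (B i) = B.repr (X2 (B i)) 0 • B 0 + B.repr (X2 (B i)) 1 • B 1 := by
    conv_lhs => rw [← B.sum_repr (X2 (B i)), Fin.sum_univ_two]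
  set a := B.repr (X2 (B 0)) 0
  set c := B.repr (X2 (B 0)) 1
  set b := B.repr (X2 (B 1)) 0
  set d := B.repr (X2 (B 1)) 1
  have hX0 : X2 (B 0) = a • B 0 + c • B 1 := hX2 0
  have hX1 : X2 (B 1) = b • B 0 + d • B 1 := hX2 1
  have hrel : (a * a + c * b) • B 0 + (a * c + c * d) • B 1 = (b * c + d * d + c) • B 0 := by
    have h := congrArg (fun f : Module.End k V => f (B 1)) h2
    simp only [pow_two, Module.End.mul_apply, LinearMap.add_apply, hX0, hX1, map_add, map_smul,
      hB0, hB1] at h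
    linear_combination (norm := module) h
  have hcoord (i : Fin 2) := congrArg (fun x => B.repr x i) hrel
  have eq0 : a ^ 2 = d ^ 2 + c := by
    linear_combination (by simpa using hcoord 0 : a * a + c * b = b * c + d * d + c)
  have eq1 : c * (a + d) = 0 := by
    linear_combination (by simpa using hcoord 1 : a * c + c * d = 0)
  have hc : c = 0 := by
    by_contra hc
    have had : a + d = 0 := (mul_eq_zero.mp eq1).resolve_left hc
    exact hc (by linear_combination (a - d) * had - eq0)
  refine ⟨a, b, d, by linear_combination -eq0 - hc, ?_, hX1⟩
  rw [hX0, hc, zero_smul, add_zero]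

theorem exists_basis_diagonal [NeZero (2 : k)] (hdim : finrank k V = 2)
    (B : Basis (Fin 2) k V) (hB0 : X1 (B 0) = 0) (hB1 : X1 (B 1) = B 0) {a b : k} (ha : a ≠ 0)
    (hX0 : X2 (B 0) = a • B 0) (hX1 : X2 (B 1) = b • B 0 + -a • B 1) :
    ∃ B' : Basis (Fin 2) k V, X1 (B' 0) = 0 ∧ X1 (B' 1) = B' 0 ∧
      X2 (B' 0) = a • B' 0 ∧ X2 (B' 1) = -a • B' 1 := by
  set w := B 1 + (-b / (2 * a)) • B 0
  have hXw : X1 w = B 0 := by simp [w, hB0, hB1]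
  obtain ⟨B', hB'0, hB'1⟩ := exists_basis_apply_self hdim (f := X1) (w := w)
    (by rw [hXw]; exact B.ne_zero 0) (by rw [hXw, hB0])
  rw [hXw] at hB'0
  refine ⟨B', by rw [hB'0, hB0], by rw [hB'1, hXw, hB'0], by rw [hB'0, hX0], ?_⟩
  rw [hB'1, map_add, map_smul, hX0, hX1]
  match_scalars
  · field_simp
    ring
  · ring

theorem exists_basis_normalForm [NeZero (2 : k)] (hdim : finrank k V = 2)
    (h1 : X1 * X1 = 0) (h2 : X2 ^ 2 * X1 = X1 * X2 ^ 2 + X1 * X2 * X1) (h0 : X1 ≠ 0) :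
    ∃ v : Basis (Fin 2) k V, X1 (v 0) = 0 ∧ X1 (v 1) = v 0 ∧
      ((∃ a b : k, X2 (v 0) = a • v 0 ∧ X2 (v 1) = b • v 0 + a • v 1) ∨
       (∃ a : k, a ≠ 0 ∧ X2 (v 0) = a • v 0 ∧ X2 (v 1) = -a • v 1)) := by
  obtain ⟨w, hw⟩ : ∃ w, X1 w ≠ 0 := by
    by_contra! h
    exact h0 (LinearMap.ext h)
  have hX1w : X1 (X1 w) = 0 := by rw [← Module.End.mul_apply, h1, LinearMap.zero_apply]
  obtain ⟨B, hB0, hB1⟩ := exists_basis_apply_self hdim hw hX1w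
  have hXB0 : X1 (B 0) = 0 := by rw [hB0, hX1w]
  have hXB1 : X1 (B 1) = B 0 := by rw [hB1, hB0]
  obtain ⟨a, b, d, hda, hX0, hX1⟩ := exists_upperTriangular_of_relation B hXB0 hXB1 h2
  rcases sq_eq_sq_iff_eq_or_eq_neg.mp hda with rfl | rfl
  · exact ⟨B, hXB0, hXB1, Or.inl ⟨d, b, hX0, hX1⟩⟩
  by_cases ha : a = 0
  · subst ha
    exact ⟨B, hXB0, hXB1, Or.inl ⟨0, b, hX0, by simpa using hX1⟩⟩
  obtain ⟨B', hB'⟩ := exists_basis_diagonal hdim B hXB0 hXB1 ha hX0 hX1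
  exact ⟨B', hB'.1, hB'.2.1, Or.inr ⟨a, ha, hB'.2.2⟩⟩

end

theorem stmt16_general (k V : Type*) [Field k] [CharZero k] [AddCommGroup V] [Module k V]
    (hdim : Module.finrank k V = 2)
    (X1 X2 : Module.End k V) (h1 : X1 * X1 = 0)
    (h2 : X2 ^ 2 * X1 = X1 * X2 ^ 2 + X1 * X2 * X1)
    (h0 : X1 ≠ 0) :
    (∃ v : Module.Basis (Fin 2) k V, X1 (v 0) = 0 ∧ X1 (v 1) = v 0 ∧
      ((∃ a b : k, X2 (v 0) = a • v 0 ∧ X2 (v 1) = b • v 0 + a • v 1) ∨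
       (∃ a : k, a ≠ 0 ∧ X2 (v 0) = a • v 0 ∧ X2 (v 1) = -a • v 1))) ∧
    (∃ e : V ≃ₗ[k] (Fin 2 → k),
      (∀ u : V, e (X1 u) = Matrix.toLin' !![(0 : k), 1; 0, 0] (e u)) ∧
      ((∃ a b : k, ∀ u : V, e (X2 u) = Matrix.toLin' !![a, b; 0, a] (e u)) ∨
       (∃ a : k, a ≠ 0 ∧
          ∀ u : V, e (X2 u) = Matrix.toLin' !![a, 0; 0, -a] (e u)))) := by
  have hnf := exists_basis_normalForm hdim h1 h2 h0
  refine ⟨hnf, ?_⟩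
  obtain ⟨B, hB0, hB1, hX2⟩ := hnf
  refine ⟨B.equivFun, B.equivFun_apply_eq_toLin' fun j => ?_, ?_⟩
  · fin_cases j <;> simp [hB0, hB1]
  rcases hX2 with ⟨a, b, hX0, hX1⟩ | ⟨a, ha, hX0, hX1⟩
  · exact Or.inl ⟨a, b, B.equivFun_apply_eq_toLin' fun j => by fin_cases j <;> simp [hX0, hX1]⟩
  · exact Or.inr ⟨a, ha, B.equivFun_apply_eq_toLin' fun j => by fin_cases j <;> simp [hX0, hX1]⟩

theorem stmt16 (k V : Type*) [Field k] [CharZero k] [AddCommGroup V] [Module k V]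
    [FiniteDimensional k V] (hdim : Module.finrank k V = 2)
    (X1 X2 : Module.End k V) (h1 : X1 * X1 = 0)
    (h2 : X2 ^ 2 * X1 = X1 * X2 ^ 2 + X1 * X2 * X1)
    (h0 : X1 ≠ 0) :
    (∃ v : Module.Basis (Fin 2) k V, X1 (v 0) = 0 ∧ X1 (v 1) = v 0 ∧
      ((∃ a b : k, X2 (v 0) = a • v 0 ∧ X2 (v 1) = b • v 0 + a • v 1) ∨
       (∃ a : k, a ≠ 0 ∧ X2 (v 0) = a • v 0 ∧ X2 (v 1) = -a • v 1))) ∧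
    (∃ e : V ≃ₗ[k] (Fin 2 → k),
      (∀ u : V, e (X1 u) = Matrix.toLin' !![(0 : k), 1; 0, 0] (e u)) ∧
      ((∃ a b : k, ∀ u : V, e (X2 u) = Matrix.toLin' !![a, b; 0, a] (e u)) ∨
       (∃ a : k, a ≠ 0 ∧
          ∀ u : V, e (X2 u) = Matrix.toLin' !![a, 0; 0, -a] (e u)))) :=
  stmt16_general k V hdim X1 X2 h1 h2 h0
end

section
/- Let (X1, X2) be a representation of the super Jordan plane on a 2-dimensional k-vector space V, and let W be a 1-dimensional submodule of V such that X2 acts on W by the scalar b, X1 V ⊆ W, and X2 v − a·v ∈ W for all v ∈ V (so V is an extension of the 1-dimensional module k_a by k_b, where k_c denotes the 1-dimensional representation with X1 = 0 and X2 = c). If there is no submodule L with V = W ⊕ L (i.e., the extension does not split), then a = b or a = −b. -/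
theorem stmt17 (k V : Type*) [Field k] [CharZero k] [AddCommGroup V] [Module k V]
    [FiniteDimensional k V] (hdim : Module.finrank k V = 2)
    (X1 X2 : Module.End k V) (h1 : X1 * X1 = 0)
    (h2 : X2 ^ 2 * X1 = X1 * X2 ^ 2 + X1 * X2 * X1)
    (W : Submodule k V) (hW : IsSubrep X1 X2 W) (hWdim : Module.finrank k W = 1)
    (a b : k)
    (hb : ∀ w ∈ W, X2 w = b • w)
    (hX1W : ∀ u : V, X1 u ∈ W)
    (ha : ∀ u : V, X2 u - a • u ∈ W)
    (hnosplit : ¬ ∃ L : Submodule k V, IsSubrep X1 X2 L ∧ IsCompl W L) :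
    a = b ∨ a = -b := by
  by_contra hcon
  push_neg at hcon
  obtain ⟨hab, hab'⟩ := hcon
  -- a spanning vector of W
  obtain ⟨w₀, hw₀ne, hw₀span⟩ := finrank_eq_one_iff'.mp hWdim
  have hwW : (w₀ : V) ∈ W := w₀.2
  set w : V := (w₀ : V) with hwdef
  have hwne : w ≠ 0 := fun h => hw₀ne (Subtype.ext h)
  have hmem : ∀ x ∈ W, ∃ c : k, x = c • w := by
    intro x hx
    obtain ⟨c, hc⟩ := hw₀span ⟨x, hx⟩
    exact ⟨c, by simpa using (congrArg Subtype.val hc).symm⟩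
  have hX2w : X2 w = b • w := hb w hwW
  have hX1w : X1 w = 0 := by
    obtain ⟨c, hc⟩ := hmem (X1 w) (hX1W w)
    have h0 : X1 (X1 w) = 0 := by
      have := DFunLike.congr_fun h1 w
      simpa [Module.End.mul_apply] using this
    rw [hc, map_smul, hc, smul_smul] at h0
    rcases smul_eq_zero.mp h0 with h | h
    · rw [hc, mul_self_eq_zero.mp h, zero_smul]
    · exact absurd h hwne
  -- a vector outside W
  have hWtop : W ≠ ⊤ := by
    intro h
    rw [h, finrank_top] at hWdim
    omega
  have hex : ¬ ∀ u : V, u ∈ W := fun h => hWtop (Submodule.eq_top_iff'.mpr h)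
  push_neg at hex
  obtain ⟨v, hvW⟩ := hex
  obtain ⟨μ, hμ⟩ := hmem (X1 v) (hX1W v)
  obtain ⟨lam, hlam⟩ := hmem (X2 v - a • v) (ha v)
  have hX2v : X2 v = a • v + lam • w := by rw [← hlam]; abel
  -- the relation forces μ = 0
  have hrel := DFunLike.congr_fun h2 v
  simp only [Module.End.mul_apply, LinearMap.add_apply, pow_two, Module.End.mul_apply,
    hμ, hX2v, map_add, map_smul, hX2w, hX1w, smul_smul, smul_zero, smul_add,
    add_zero, zero_add] at hrel
  have hμ0 : μ = 0 := by
    have key : (μ * (b * b) - a * a * μ) • w = 0 := by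
      rw [sub_smul, hrel, sub_self]
    rcases smul_eq_zero.mp key with h | h
    · by_contra hμne
      have hfac : μ * ((a - b) * (a + b)) = 0 := by linear_combination -h
      rcases mul_eq_zero.mp hfac with h' | h'
      · exact hμne h'
      · rcases mul_eq_zero.mp h' with h'' | h''
        · exact hab (sub_eq_zero.mp h'')
        · exact hab' (eq_neg_of_add_eq_zero_left h'')
    · exact absurd h hwne
  have hX1v : X1 v = 0 := by rw [hμ, hμ0, zero_smul]
  -- the complementary vector
  set t : k := lam / (a - b) with ht
  set v' : V := v + t • w with hv'
  have habne : a - b ≠ 0 := sub_ne_zero.mpr hab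
  have hX1v' : X1 v' = 0 := by rw [hv', map_add, hX1v, map_smul, hX1w, smul_zero, add_zero]
  have hX2v' : X2 v' = a • v' := by
    rw [hv', map_add, hX2v, map_smul, hX2w, smul_add, smul_smul, smul_smul]
    have : lam + t * b = a * t := by
      rw [ht]; field_simp; ring
    rw [add_assoc, ← add_smul, this]
  have hv'W : v' ∉ W := by
    intro h
    apply hvW
    have : v = v' - t • w := by rw [hv']; abel
    rw [this]
    exact W.sub_mem h (W.smul_mem t hwW)
  have hv'ne : v' ≠ 0 := fun h => hv'W (h ▸ W.zero_mem)
  set L : Submodule k V := Submodule.span k {v'} with hL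
  have hsubrep : IsSubrep X1 X2 L := by
    constructor
    · rw [hL, Submodule.map_span_le]
      rintro x rfl
      rw [hX1v']
      exact L.zero_mem
    · rw [hL, Submodule.map_span_le]
      rintro x rfl
      rw [hX2v']
      exact L.smul_mem a (Submodule.mem_span_singleton_self v')
  have hdisj : Disjoint W L := by
    rw [Submodule.disjoint_def]
    intro x hxW hxL
    obtain ⟨c, rfl⟩ := Submodule.mem_span_singleton.mp hxL
    rcases eq_or_ne c 0 with h | h
    · rw [h, zero_smul]
    · exfalso
      apply hv'W
      have : v' = c⁻¹ • (c • v') := by rw [smul_smul, inv_mul_cancel₀ h, one_smul]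
      rw [this]
      exact W.smul_mem _ hxW
  have hLdim : Module.finrank k L = 1 := finrank_span_singleton hv'ne
  have hsup : W ⊔ L = ⊤ := by
    apply Submodule.eq_top_of_finrank_eq
    have := Submodule.finrank_sup_add_finrank_inf_eq W L
    rw [disjoint_iff.mp hdisj, finrank_bot, add_zero, hWdim, hLdim] at this
    omega
  exact hnosplit ⟨L, hsubrep, hdisj, codisjoint_iff.mpr hsup⟩
end
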